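/- arXiv:2305.15085 — 8 statements merged into one kernel-verified Lean document; each statement's English description precedes it below -/
import Mathlib

section
/- Let A, B be positive bounded operators on a Hilbert space H, and let X, Y be the unique contractions from the closure of ran((A+B)^{1/2}) to H satisfying X(A+B)^{1/2} = A^{1/2} and Y(A+B)^{1/2} = B^{1/2}. Then X*X + Y*Y equals the identity on the closure of ran((A+B)^{1/2}); in particular, X*X and Y*Y commute. -/
open ContinuousLinearMap Filter Topology
open scoped InnerProductSpace

noncomputable section

variable {H : Type*} [NormedAddCommGroup H] [InnerProductSpace ℂ H] [CompleteSpace H]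

/-- `P` is the orthogonal projection of `H` onto the closure of the range of `T`. -/
def IsRangeProj (T P : H →L[ℂ] H) : Prop :=
  IsSelfAdjoint P ∧ P ∘L P = P ∧ Set.range (⇑P) = closure (Set.range (⇑T))

/-- `S` is a positive square root of `A`. -/
def IsSqrtOf (A S : H →L[ℂ] H) : Prop := S.IsPositive ∧ S ∘L S = A

/-- `Y = V ∘ M` is the polar decomposition of `Y`: `M = |Y| = (Y*Y)^{1/2}` and `V` is the
partial isometry (isometric on the closure of `ran |Y|`) vanishing on the orthogonal
complement of the range of `|Y|`. -/
def IsPolarDecomp (Y V M : H →L[ℂ] H) : Prop :=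
  M.IsPositive ∧ M ∘L M = adjoint Y ∘L Y ∧ V ∘L M = Y ∧
    (∀ ξ : H, ‖V (M ξ)‖ = ‖M ξ‖) ∧
    ∀ ξ : H, (∀ η : H, ⟪M η, ξ⟫_ℂ = 0) → V ξ = 0

/-- Ando's mutual singularity `A ⊥ B`: no nonzero positive operator is dominated by both. -/
def MutuallySingular (A B : H →L[ℂ] H) : Prop :=
  ∀ C : H →L[ℂ] H, C.IsPositive → (A - C).IsPositive → (B - C).IsPositive → C = 0

/-- Ando's absolute continuity `B ⋖ A`: some sequence of positive operators `Bn` increases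
strongly to `B` with `Bn ≤ αₙ A`. -/
def AbsCont (B A : H →L[ℂ] H) : Prop :=
  ∃ (Bn : ℕ → H →L[ℂ] H) (α : ℕ → ℝ),
    (∀ n, (Bn n).IsPositive) ∧ (∀ n, (Bn (n + 1) - Bn n).IsPositive) ∧
    (∀ n, 0 < α n) ∧ (∀ n, ((α n : ℂ) • A - Bn n).IsPositive) ∧
    ∀ ξ : H, Tendsto (fun n => Bn n ξ) atTop (𝓝 (B ξ))

/-- `Pab` is the parallel sum `A : B`, i.e. the strong limit of `A (A + B + ε·1)⁻¹ B`
as `ε → 0+`. -/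
def IsParallelSum (A B Pab : H →L[ℂ] H) : Prop :=
  ∀ ξ : H, Tendsto
    (fun ε : ℝ => (A ∘L Ring.inverse (A + B + (ε : ℂ) • (1 : H →L[ℂ] H)) ∘L B) ξ)
    (𝓝[>] (0 : ℝ)) (𝓝 (Pab ξ))

/-- `C = [A]B`, Ando's maximal `A`-absolutely continuous part of `B`, defined as the
strong limit of the parallel sums `(nA) : B`. -/
def IsLebesguePart (A B C : H →L[ℂ] H) : Prop :=
  ∃ PS : ℕ → H →L[ℂ] H, (∀ n : ℕ, IsParallelSum ((n : ℂ) • A) B (PS n)) ∧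
    ∀ ξ : H, Tendsto (fun n => PS n ξ) atTop (𝓝 (C ξ))

/-- The canonical data attached to a pair of positive operators `A, B`: the positive square
roots of `A`, `B`, `A + B`, and the (unique) Douglas contractions `X, Y` satisfying
`X (A+B)^{1/2} = A^{1/2}`, `Y (A+B)^{1/2} = B^{1/2}` and vanishing on the orthogonal
complement of `ran (A+B)^{1/2}` (i.e. the operators on `K = cl ran (A+B)^{1/2}`, viewed
as operators on `H`). -/
structure DouglasTuple (A B : H →L[ℂ] H) where
  sqA : H →L[ℂ] H
  sqB : H →L[ℂ] H
  sqAB : H →L[ℂ] H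
  X : H →L[ℂ] H
  Y : H →L[ℂ] H
  sqA_pos : sqA.IsPositive
  sqA_sq : sqA ∘L sqA = A
  sqB_pos : sqB.IsPositive
  sqB_sq : sqB ∘L sqB = B
  sqAB_pos : sqAB.IsPositive
  sqAB_sq : sqAB ∘L sqAB = A + B
  X_contr : ‖X‖ ≤ 1
  Y_contr : ‖Y‖ ≤ 1
  X_eq : X ∘L sqAB = sqA
  Y_eq : Y ∘L sqAB = sqB
  X_supp : ∀ ξ : H, (∀ η : H, ⟪sqAB η, ξ⟫_ℂ = 0) → X ξ = 0
  Y_supp : ∀ ξ : H, (∀ η : H, ⟪sqAB η, ξ⟫_ℂ = 0) → Y ξ = 0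

/-- `Φ` is a bounded Borel functional calculus for the self-adjoint operator `T`:
an ℝ-linear multiplicative unital self-adjointness-preserving map on (bounded) Borel
functions sending `id` to `T`, depending only on values on the spectrum, and continuous
under uniformly bounded pointwise convergence (in the strong operator topology). -/
def IsBorelCalc (T : H →L[ℂ] H) (Φ : (ℝ → ℝ) → H →L[ℂ] H) : Prop :=
  (∀ f g : ℝ → ℝ, Measurable f → Measurable g → Φ (f + g) = Φ f + Φ g) ∧
  (∀ f g : ℝ → ℝ, Measurable f → Measurable g → Φ (f * g) = Φ f ∘L Φ g) ∧
  (∀ (c : ℝ) (f : ℝ → ℝ), Measurable f → Φ (c • f) = (c : ℂ) • Φ f) ∧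
  (Φ (fun _ => 1) = 1) ∧
  (Φ id = T) ∧
  (∀ f : ℝ → ℝ, Measurable f → IsSelfAdjoint (Φ f)) ∧
  (∀ f g : ℝ → ℝ, Measurable f → Measurable g →
    (∀ x : ℝ, (x : ℂ) ∈ spectrum ℂ T → f x = g x) → Φ f = Φ g) ∧
  (∀ (f : ℕ → ℝ → ℝ) (g : ℝ → ℝ) (M : ℝ), (∀ n, Measurable (f n)) → Measurable g →
    (∀ n x, |f n x| ≤ M) → (∀ x : ℝ, Tendsto (fun n => f n x) atTop (𝓝 (g x))) →
    ∀ ξ : H, Tendsto (fun n => Φ (f n) ξ) atTop (𝓝 (Φ g ξ)))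

/-- `C` is the Pusz–Woronowicz functional calculus `φ(A, B)`: with `T = (A+B)^{1/2}`,
`R = X*X`, `S = Y*Y = 1 - R` (on `K`), one has `C = T φ(R, S) T = T Φ(x ↦ φ(x, 1-x)) T`
for a Borel functional calculus `Φ` of `R`. -/
def IsPW (A B : H →L[ℂ] H) (φ : ℝ → ℝ → ℝ) (C : H →L[ℂ] H) : Prop :=
  ∃ (d : DouglasTuple A B) (Φ : (ℝ → ℝ) → H →L[ℂ] H),
    IsBorelCalc (adjoint d.X ∘L d.X) Φ ∧
    C = d.sqAB ∘L Φ (fun x => φ x (1 - x)) ∘L d.sqAB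

/-- With `X, Y` the Douglas contractions for positive `A, B` and `P` the projection onto
`K = cl ran (A+B)^{1/2}`, one has `X*X + Y*Y = 1` on `K`; in particular `X*X` and `Y*Y`
commute. -/
theorem stmt0 (A B : H →L[ℂ] H) (hA : A.IsPositive) (hB : B.IsPositive)
    (d : DouglasTuple A B) (P : H →L[ℂ] H) (hP : IsRangeProj d.sqAB P) :
    adjoint d.X ∘L d.X + adjoint d.Y ∘L d.Y = P ∧
      Commute (adjoint d.X ∘L d.X) (adjoint d.Y ∘L d.Y) := by
  obtain ⟨hPsa, hPidem, hPrange⟩ := hP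
  have hPadj : adjoint P = P := hPsa.adjoint_eq
  set T := d.sqAB with hTdef
  set X := d.X with hXdef
  set Y := d.Y with hYdef
  have hTadj : adjoint T = T := d.sqAB_pos.isSelfAdjoint.adjoint_eq
  have hAadj : adjoint d.sqA = d.sqA := d.sqA_pos.isSelfAdjoint.adjoint_eq
  have hBadj : adjoint d.sqB = d.sqB := d.sqB_pos.isSelfAdjoint.adjoint_eq
  set R := adjoint X ∘L X with hRdef
  set S := adjoint Y ∘L Y with hSdef
  -- applied versions of the compositional identities
  have hXT : ∀ ζ, X (T ζ) = d.sqA ζ := fun ζ => DFunLike.congr_fun d.X_eq ζ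
  have hYT : ∀ ζ, Y (T ζ) = d.sqB ζ := fun ζ => DFunLike.congr_fun d.Y_eq ζ
  have hsqA2 : ∀ ζ, d.sqA (d.sqA ζ) = A ζ := fun ζ => DFunLike.congr_fun d.sqA_sq ζ
  have hsqB2 : ∀ ζ, d.sqB (d.sqB ζ) = B ζ := fun ζ => DFunLike.congr_fun d.sqB_sq ζ
  have hT2 : ∀ ζ, T (T ζ) = (A + B) ζ := fun ζ => DFunLike.congr_fun d.sqAB_sq ζ
  have hPP : ∀ ξ, P (P ξ) = P ξ := fun ξ => DFunLike.congr_fun hPidem ξ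
  -- P fixes the range of T
  have hPT : ∀ ζ, P (T ζ) = T ζ := by
    intro ζ
    have hmem : T ζ ∈ Set.range (⇑P) := by
      rw [hPrange]; exact subset_closure ⟨ζ, rfl⟩
    obtain ⟨u, hu⟩ := hmem
    rw [← hu, hPP]
  -- inner products against vectors orthogonal to range T extend to the closure
  have hinner_closure : ∀ v : H, (∀ η, ⟪T η, v⟫_ℂ = 0) →
      ∀ w ∈ closure (Set.range (⇑T)), ⟪w, v⟫_ℂ = 0 := by
    intro v hv w hw
    have hcl : IsClosed {w : H | ⟪w, v⟫_ℂ = 0} :=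
      isClosed_eq (continuous_id.inner continuous_const) continuous_const
    exact closure_minimal (by rintro _ ⟨η, rfl⟩; exact hv η) hcl hw
  -- the key computation : ⟪Tη, (R+S)(Tζ)⟫ = ⟪Tη, Tζ⟫
  have hRS : ∀ η ζ : H, ⟪T η, (R + S) (T ζ)⟫_ℂ = ⟪T η, T ζ⟫_ℂ := by
    intro η ζ
    have h1 : ⟪T η, R (T ζ)⟫_ℂ = ⟪η, A ζ⟫_ℂ := by
      rw [hRdef, ContinuousLinearMap.comp_apply, adjoint_inner_right, hXT, hXT,
        ← hAadj, adjoint_inner_left, hAadj, hsqA2]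
    have h2 : ⟪T η, S (T ζ)⟫_ℂ = ⟪η, B ζ⟫_ℂ := by
      rw [hSdef, ContinuousLinearMap.comp_apply, adjoint_inner_right, hYT, hYT,
        ← hBadj, adjoint_inner_left, hBadj, hsqB2]
    have h3 : ⟪T η, T ζ⟫_ℂ = ⟪η, A ζ⟫_ℂ + ⟪η, B ζ⟫_ℂ := by
      rw [← hTadj, adjoint_inner_left, hTadj, hT2]
      simp [ContinuousLinearMap.add_apply, inner_add_right]
    rw [ContinuousLinearMap.add_apply, inner_add_right, h1, h2, h3]
  set D := R + S - P with hDdef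
  have hDadj : adjoint D = D := by
    rw [hDdef, hRdef, hSdef]
    simp only [map_sub, map_add, adjoint_comp, adjoint_adjoint, hPadj]
  -- the orthogonal complement part of any ξ (relative to P)
  have hperpPart : ∀ ξ η : H, ⟪T η, ξ - P ξ⟫_ℂ = 0 := by
    intro ξ η
    rw [inner_sub_right, ← hPadj, adjoint_inner_right, hPT, sub_self]
  -- D kills vectors orthogonal to range T
  have hDperp : ∀ v : H, (∀ η, ⟪T η, v⟫_ℂ = 0) → D v = 0 := by
    intro v hv
    have hXv : X v = 0 := d.X_supp v hv
    have hYv : Y v = 0 := d.Y_supp v hv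
    have hPv : P v = 0 := by
      have h1 : ⟪P v, P v⟫_ℂ = ⟪P v, v⟫_ℂ := by
        rw [← adjoint_inner_left, hPadj, hPP]
      have h2 : ⟪P v, v⟫_ℂ = 0 := by
        apply hinner_closure v hv
        rw [← hPrange]; exact ⟨v, rfl⟩
      rw [← inner_self_eq_zero (𝕜 := ℂ), h1, h2]
    simp [hDdef, hRdef, hSdef, ContinuousLinearMap.sub_apply,
      ContinuousLinearMap.add_apply, hXv, hYv, hPv]
  -- D kills the range of T
  have hDrange : ∀ ζ : H, D (T ζ) = 0 := by
    intro ζ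
    set w := D (T ζ) with hwdef
    have hw_orth : ∀ η, ⟪T η, w⟫_ℂ = 0 := by
      intro η
      rw [hwdef, hDdef, ContinuousLinearMap.sub_apply, inner_sub_right, hRS, hPT, sub_self]
    have h1 : ⟪P w, w⟫_ℂ = 0 := by
      apply hinner_closure w hw_orth
      rw [← hPrange]; exact ⟨w, rfl⟩
    have h2 : ⟪w - P w, w⟫_ℂ = 0 := by
      show ⟪w - P w, D (T ζ)⟫_ℂ = 0
      rw [← adjoint_inner_left, hDadj, hDperp _ (fun η => hperpPart w η), inner_zero_left]
    have h3 : ⟪w, w⟫_ℂ = 0 := by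
      have hsplit : w = P w + (w - P w) := by abel
      calc ⟪w, w⟫_ℂ = ⟪P w + (w - P w), w⟫_ℂ := by rw [← hsplit]
        _ = ⟪P w, w⟫_ℂ + ⟪w - P w, w⟫_ℂ := inner_add_left _ _ _
        _ = 0 := by rw [h1, h2, add_zero]
    exact inner_self_eq_zero.mp h3
  -- D = 0
  have hDzero : ∀ ξ : H, D ξ = 0 := by
    intro ξ
    have hDP : D (P ξ) = 0 := by
      have hcl : IsClosed {v : H | D v = 0} :=
        isClosed_eq D.continuous continuous_const
      have hsub : closure (Set.range (⇑T)) ⊆ {v : H | D v = 0} :=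
        closure_minimal (by rintro _ ⟨ζ, rfl⟩; exact hDrange ζ) hcl
      apply hsub
      rw [← hPrange]; exact ⟨ξ, rfl⟩
    have hDu : D (ξ - P ξ) = 0 := hDperp _ (fun η => hperpPart ξ η)
    have h5 := map_sub D ξ (P ξ)
    rw [hDu] at h5
    rw [sub_eq_zero.mp h5.symm, hDP]
  have hsum : R + S = P := by
    ext ξ
    have hz := hDzero ξ
    rw [hDdef, ContinuousLinearMap.sub_apply, sub_eq_zero] at hz
    exact hz
  refine ⟨hsum, ?_⟩
  -- commutation: first show R commutes with P
  have hRP : ∀ ξ, R (P ξ) = R ξ := by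
    intro ξ
    have hXu : X (ξ - P ξ) = 0 := d.X_supp _ (fun η => hperpPart ξ η)
    have hd : X ξ - X (P ξ) = 0 := by rw [← map_sub, hXu]
    have hXP : X (P ξ) = X ξ := (sub_eq_zero.mp hd).symm
    rw [hRdef, ContinuousLinearMap.comp_apply, hXP, ContinuousLinearMap.comp_apply]
  have hPR : ∀ ξ, P (R ξ) = R ξ := by
    intro ξ
    set v := R ξ with hvdef
    set u := v - P v with hudef
    have hu_orth : ∀ η, ⟪T η, u⟫_ℂ = 0 := fun η => hperpPart v η
    have hXu : X u = 0 := d.X_supp _ hu_orth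
    have h1 : ⟪u, v⟫_ℂ = 0 := by
      rw [hvdef, hRdef, ContinuousLinearMap.comp_apply, adjoint_inner_right, hXu,
        inner_zero_left]
    have h2 : ⟪u, P v⟫_ℂ = 0 := by
      rw [inner_eq_zero_symm]
      apply hinner_closure u hu_orth
      rw [← hPrange]; exact ⟨v, rfl⟩
    have h3 : ⟪u, u⟫_ℂ = 0 := by
      rw [hudef, inner_sub_right, h1, h2, sub_zero]
    have hu0 : u = 0 := inner_self_eq_zero.mp h3
    have hv0 : v - P v = 0 := by rw [← hudef]; exact hu0
    exact (sub_eq_zero.mp hv0).symm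
  have hcommRP : Commute R P := by
    ext ξ
    show (R * P) ξ = (P * R) ξ
    rw [ContinuousLinearMap.mul_apply, ContinuousLinearMap.mul_apply, hRP, hPR]
  have hSeq : S = P - R := by rw [← hsum]; abel
  rw [hSeq]
  exact hcommRP.sub_right (Commute.refl R)

end
end

section
/- Let A, B be positive bounded operators on a Hilbert space H, let K denote the closure of ran((A+B)^{1/2}), and let T : H → K be given by ξ ↦ (A+B)^{1/2}ξ. Then the map Γ(C̃) = T* C̃ T is an order-preserving bijection from {C̃ ∈ B(K) : 0 ≤ C̃ ≤ I_K} onto {C ∈ B(H) : 0 ≤ C ≤ A+B}, with order-preserving inverse, and Γ(X*X) = A, Γ(Y*Y) = B where X, Y are the Douglas contractions with X T = A^{1/2}, Y T = B^{1/2}. -/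
set_option maxHeartbeats 1000000
set_option synthInstance.maxHeartbeats 400000


open ContinuousLinearMap Filter Topology
open scoped InnerProductSpace

noncomputable section

variable {H : Type*} [NormedAddCommGroup H] [InnerProductSpace ℂ H] [CompleteSpace H]

private lemma aux_norm_sq (W : H →L[ℂ] H) (ξ : H) :
    RCLike.re ⟪(adjoint W ∘L W) ξ, ξ⟫_ℂ = ‖W ξ‖ ^ 2 := by
  rw [comp_apply, adjoint_inner_left, inner_self_eq_norm_sq]

private lemma adjoint_comp_self_pos (W : H →L[ℂ] H) : (adjoint W ∘L W).IsPositive := by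
  refine ⟨?_, fun ξ => ?_⟩
  · rw [← isSelfAdjoint_iff_isSymmetric, isSelfAdjoint_iff', adjoint_comp, adjoint_adjoint]
  · show (0:ℝ) ≤ RCLike.re ⟪(adjoint W ∘L W) ξ, ξ⟫_ℂ
    rw [aux_norm_sq]; positivity

private lemma rangeProj_symm {T P : H →L[ℂ] H} (hP : IsRangeProj T P) (a b : H) :
    ⟪P a, b⟫_ℂ = ⟪a, P b⟫_ℂ := by
  conv_lhs => rw [← hP.1.adjoint_eq]
  exact adjoint_inner_left P b a

private lemma rangeProj_fix {T P : H →L[ℂ] H} (hP : IsRangeProj T P) (ξ : H) :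
    P (T ξ) = T ξ := by
  have h1 : T ξ ∈ Set.range ⇑P := by
    rw [hP.2.2]; exact subset_closure (Set.mem_range_self ξ)
  obtain ⟨ζ, hζ⟩ := h1
  rw [← hζ]
  exact ContinuousLinearMap.ext_iff.mp hP.2.1 ζ

private lemma rangeProj_norm_le {T P : H →L[ℂ] H} (hP : IsRangeProj T P) (ξ : H) :
    ‖P ξ‖ ≤ ‖ξ‖ := by
  have h1 : ‖P ξ‖ ^ 2 ≤ ‖ξ‖ * ‖P ξ‖ := by
    have h2 : ⟪P ξ, P ξ⟫_ℂ = ⟪ξ, P (P ξ)⟫_ℂ := rangeProj_symm hP ξ (P ξ)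
    have h3 : P (P ξ) = P ξ := ContinuousLinearMap.ext_iff.mp hP.2.1 ξ
    calc ‖P ξ‖ ^ 2 = RCLike.re ⟪P ξ, P ξ⟫_ℂ := (inner_self_eq_norm_sq _).symm
      _ = RCLike.re ⟪ξ, P ξ⟫_ℂ := by rw [h2, h3]
      _ ≤ ‖⟪ξ, P ξ⟫_ℂ‖ := RCLike.re_le_norm _
      _ ≤ ‖ξ‖ * ‖P ξ‖ := norm_inner_le_norm _ _
  rcases eq_or_lt_of_le (norm_nonneg (P ξ)) with h0 | h0
  · rw [← h0]; exact norm_nonneg ξ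
  · exact le_of_mul_le_mul_right (by nlinarith) h0

private lemma douglas_exists (S T : H →L[ℂ] H) (hST : ∀ ξ : H, ‖S ξ‖ ≤ ‖T ξ‖)
    (P : H →L[ℂ] H) (hP : IsRangeProj T P) :
    ∃ W : H →L[ℂ] H, ‖W‖ ≤ 1 ∧ W ∘L T = S ∧ W ∘L P = W := by
  set K₀ : Submodule ℂ H := LinearMap.range (T : H →ₗ[ℂ] H) with hK₀
  set Kc : Submodule ℂ H := K₀.topologicalClosure with hKc
  have hker : LinearMap.ker (T : H →ₗ[ℂ] H) ≤ LinearMap.ker (S : H →ₗ[ℂ] H) := by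
    intro x hx
    rw [LinearMap.mem_ker] at hx ⊢
    have h1 := hST x
    have hx' : T x = 0 := hx
    rw [hx', norm_zero] at h1
    exact norm_le_zero_iff.mp h1
  obtain ⟨W₀ₗ, key⟩ : ∃ f : K₀ →ₗ[ℂ] H, ∀ (ξ : H) (h : T ξ ∈ K₀), f ⟨T ξ, h⟩ = S ξ := by
    refine ⟨((LinearMap.ker (T : H →ₗ[ℂ] H)).liftQ (S : H →ₗ[ℂ] H) hker).comp
        (LinearMap.quotKerEquivRange (T : H →ₗ[ℂ] H)).symm.toLinearMap, fun ξ h => ?_⟩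
    have h1 : (LinearMap.quotKerEquivRange (T : H →ₗ[ℂ] H)).symm ⟨T ξ, h⟩
        = Submodule.Quotient.mk ξ := by
      rw [LinearEquiv.symm_apply_eq]
      exact (Subtype.ext (LinearMap.quotKerEquivRange_apply_mk _ ξ)).symm
    simp only [LinearMap.comp_apply, LinearEquiv.coe_coe, h1, Submodule.liftQ_apply,
      ContinuousLinearMap.coe_coe]
  have bound : ∀ x : K₀, ‖W₀ₗ x‖ ≤ 1 * ‖x‖ := by
    rintro ⟨x, hx⟩
    obtain ⟨ξ, rfl⟩ := hx
    rw [one_mul]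
    exact le_trans (le_of_eq (congrArg norm (key ξ ⟨ξ, rfl⟩))) (hST ξ)
  set W₀ : K₀ →L[ℂ] H := LinearMap.mkContinuous W₀ₗ 1 bound with hW₀
  set e : K₀ →L[ℂ] Kc := LinearMap.mkContinuous (Submodule.inclusion K₀.le_topologicalClosure)
    1 (fun x => by rw [one_mul]; exact le_of_eq rfl) with he
  have h_e : ∀ x : K₀, ‖x‖ ≤ (1 : NNReal) * ‖e x‖ := fun x => by
    rw [NNReal.coe_one, one_mul]; rfl
  have h_dense : DenseRange ⇑e := by
    intro x
    rw [Metric.mem_closure_iff]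
    intro ε hε
    have hx : (x : H) ∈ closure (K₀ : Set H) := by
      have h2 : (x : H) ∈ K₀.topologicalClosure := x.2
      rwa [← SetLike.mem_coe, Submodule.topologicalClosure_coe] at h2
    rw [Metric.mem_closure_iff] at hx
    obtain ⟨b, hb, hdist⟩ := hx ε hε
    refine ⟨e ⟨b, hb⟩, Set.mem_range_self _, ?_⟩
    rw [Subtype.dist_eq]
    exact hdist
  set WK : Kc →L[ℂ] H :=
    W₀.extend e
    with hWK
  have hWKnorm : ‖WK‖ ≤ 1 := by
    have h2 := W₀.opNorm_extend_le (e := e) h_dense h_e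
    have h3 : ‖W₀‖ ≤ 1 := LinearMap.mkContinuous_norm_le _ zero_le_one bound
    calc ‖WK‖ ≤ (1 : NNReal) * ‖W₀‖ := h2
      _ ≤ 1 := by rw [NNReal.coe_one, one_mul]; exact h3
  have hmem : ∀ ξ : H, P ξ ∈ Kc := by
    intro ξ
    have h1 : P ξ ∈ Set.range ⇑P := Set.mem_range_self ξ
    rw [hP.2.2] at h1
    show P ξ ∈ K₀.topologicalClosure
    rw [← SetLike.mem_coe, Submodule.topologicalClosure_coe]
    have h2 : (K₀ : Set H) = Set.range ⇑T := by
      ext y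
      simp [hK₀, LinearMap.mem_range, Set.mem_range]
    rwa [h2]
  set Pc : H →L[ℂ] Kc := P.codRestrict Kc hmem with hPc
  set W : H →L[ℂ] H := WK.comp Pc with hW
  have hWapp : ∀ ξ : H, W ξ = WK (Pc ξ) := fun ξ => rfl
  refine ⟨W, ?_, ?_, ?_⟩
  · refine ContinuousLinearMap.opNorm_le_bound _ zero_le_one (fun ξ => ?_)
    rw [one_mul, hWapp]
    calc ‖WK (Pc ξ)‖ ≤ ‖WK‖ * ‖Pc ξ‖ := WK.le_opNorm _
      _ ≤ 1 * ‖Pc ξ‖ := mul_le_mul_of_nonneg_right hWKnorm (norm_nonneg _)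
      _ = ‖P ξ‖ := one_mul _
      _ ≤ ‖ξ‖ := rangeProj_norm_le hP ξ
  · ext ξ
    rw [comp_apply, hWapp]
    have h1 : Pc (T ξ) = e ⟨T ξ, ⟨ξ, rfl⟩⟩ := by
      apply Subtype.ext
      exact rangeProj_fix hP ξ
    rw [h1]
    exact (ContinuousLinearMap.extend_eq (f := W₀) (e := e) h_dense
      (ContinuousLinearMap.isUniformEmbedding_of_bound e h_e).isUniformInducing _).trans (key ξ ⟨ξ, rfl⟩)
  · ext ξ
    rw [comp_apply, hWapp, hWapp]
    congr 1
    exact Subtype.ext (ContinuousLinearMap.ext_iff.mp hP.2.1 ξ)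

/-- The map `Γ(C̃) = T* C̃ T`, `T = (A+B)^{1/2}`, is an order-isomorphism from the
operators `0 ≤ C̃ ≤ 1` on `K = cl ran (A+B)^{1/2}` onto `{C : 0 ≤ C ≤ A + B}`, with
`Γ(X*X) = A` and `Γ(Y*Y) = B`. -/
theorem stmt1 (A B : H →L[ℂ] H) (hA : A.IsPositive) (hB : B.IsPositive)
    (d : DouglasTuple A B) (P : H →L[ℂ] H) (hP : IsRangeProj d.sqAB P) :
    Set.BijOn (fun C => d.sqAB ∘L C ∘L d.sqAB)
      {C : H →L[ℂ] H | C.IsPositive ∧ (P - C).IsPositive ∧ P ∘L C ∘L P = C}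
      {C : H →L[ℂ] H | C.IsPositive ∧ (A + B - C).IsPositive} ∧
    (∀ C ∈ {C : H →L[ℂ] H | C.IsPositive ∧ (P - C).IsPositive ∧ P ∘L C ∘L P = C},
      ∀ D ∈ {C : H →L[ℂ] H | C.IsPositive ∧ (P - C).IsPositive ∧ P ∘L C ∘L P = C},
        ((D - C).IsPositive ↔
          (d.sqAB ∘L D ∘L d.sqAB - d.sqAB ∘L C ∘L d.sqAB).IsPositive)) ∧
    d.sqAB ∘L (adjoint d.X ∘L d.X) ∘L d.sqAB = A ∧
    d.sqAB ∘L (adjoint d.Y ∘L d.Y) ∘L d.sqAB = B := by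
  have hTsa : IsSelfAdjoint d.sqAB := d.sqAB_pos.isSelfAdjoint
  have hPsa := hP.1
  have hPidem := hP.2.1
  have hPrange := hP.2.2
  have hTsym : ∀ a b : H, ⟪d.sqAB a, b⟫_ℂ = ⟪a, d.sqAB b⟫_ℂ := fun a b => by
    conv_lhs => rw [← hTsa.adjoint_eq]
    exact adjoint_inner_left d.sqAB b a
  have hPsym : ∀ a b : H, ⟪P a, b⟫_ℂ = ⟪a, P b⟫_ℂ := rangeProj_symm hP
  have hPT : ∀ ξ : H, P (d.sqAB ξ) = d.sqAB ξ := rangeProj_fix hP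
  have hGamma_sub : ∀ C D : H →L[ℂ] H,
      d.sqAB ∘L (C - D) ∘L d.sqAB = d.sqAB ∘L C ∘L d.sqAB - d.sqAB ∘L D ∘L d.sqAB := by
    intro C D; ext ξ; simp [sub_apply, comp_apply, map_sub]
  have hTPT : d.sqAB ∘L P ∘L d.sqAB = A + B := by
    have h1 : P ∘L d.sqAB = d.sqAB := by ext ξ; exact hPT ξ
    calc d.sqAB ∘L P ∘L d.sqAB = d.sqAB ∘L d.sqAB := by rw [h1]
      _ = A + B := d.sqAB_sq
  have hconj : ∀ {C : H →L[ℂ] H}, C.IsPositive → (d.sqAB ∘L C ∘L d.sqAB).IsPositive := by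
    intro C hC
    have h1 := hC.adjoint_conj d.sqAB
    rwa [hTsa.adjoint_eq] at h1
  have hconj_comp : ∀ W : H →L[ℂ] H,
      d.sqAB ∘L (adjoint W ∘L W) ∘L d.sqAB = adjoint (W ∘L d.sqAB) ∘L (W ∘L d.sqAB) := by
    intro W
    rw [adjoint_comp, hTsa.adjoint_eq]
    ext ξ; rfl
  have hPEP : ∀ C D : H →L[ℂ] H, P ∘L C ∘L P = C → P ∘L D ∘L P = D →
      P ∘L (C - D) ∘L P = C - D := by
    intro C D h1 h2
    ext ξ
    have e1 : P (C (P ξ)) = C ξ := ContinuousLinearMap.ext_iff.mp h1 ξ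
    have e2 : P (D (P ξ)) = D ξ := ContinuousLinearMap.ext_iff.mp h2 ξ
    simp only [comp_apply, sub_apply, map_sub]
    rw [e1, e2]
  have h3 : d.sqAB ∘L (adjoint d.X ∘L d.X) ∘L d.sqAB = A := by
    rw [hconj_comp, d.X_eq, d.sqA_pos.isSelfAdjoint.adjoint_eq, d.sqA_sq]
  have h4 : d.sqAB ∘L (adjoint d.Y ∘L d.Y) ∘L d.sqAB = B := by
    rw [hconj_comp, d.Y_eq, d.sqB_pos.isSelfAdjoint.adjoint_eq, d.sqB_sq]
  refine ⟨⟨?_, ?_, ?_⟩, ?_, h3, h4⟩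
  · -- MapsTo
    rintro C ⟨hC1, hC2, -⟩
    refine ⟨hconj hC1, ?_⟩
    have e1 : A + B - d.sqAB ∘L C ∘L d.sqAB = d.sqAB ∘L (P - C) ∘L d.sqAB := by
      rw [hGamma_sub, hTPT]
    show (A + B - d.sqAB ∘L C ∘L d.sqAB).IsPositive
    rw [e1]
    exact hconj hC2
  · -- InjOn
    rintro C ⟨hC1, hC2, hC3⟩ D ⟨hD1, hD2, hD3⟩ heq
    simp only at heq
    have h1 : d.sqAB ∘L (C - D) ∘L d.sqAB = 0 := by
      rw [hGamma_sub, heq, sub_self]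
    have hbase : ∀ ξ η : H, ⟪(C - D) (d.sqAB ξ), d.sqAB η⟫_ℂ = 0 := by
      intro ξ η
      calc ⟪(C - D) (d.sqAB ξ), d.sqAB η⟫_ℂ
          = ⟪d.sqAB ((C - D) (d.sqAB ξ)), η⟫_ℂ := (hTsym _ _).symm
        _ = ⟪(d.sqAB ∘L (C - D) ∘L d.sqAB) ξ, η⟫_ℂ := rfl
        _ = 0 := by rw [h1]; simp
    have step1 : ∀ ξ : H, ∀ w ∈ closure (Set.range ⇑d.sqAB),
        ⟪(C - D) (d.sqAB ξ), w⟫_ℂ = 0 := by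
      intro ξ w hw
      have hsub : closure (Set.range ⇑d.sqAB) ⊆
          {w : H | ⟪(C - D) (d.sqAB ξ), w⟫_ℂ = 0} := by
        apply closure_minimal
        · rintro _ ⟨η, rfl⟩; exact hbase ξ η
        · exact isClosed_eq (Continuous.inner continuous_const continuous_id) continuous_const
      exact hsub hw
    have step2 : ∀ v ∈ closure (Set.range ⇑d.sqAB), ∀ w ∈ closure (Set.range ⇑d.sqAB),
        ⟪(C - D) v, w⟫_ℂ = 0 := by
      intro v hv w hw
      have hsub : closure (Set.range ⇑d.sqAB) ⊆ {v : H | ⟪(C - D) v, w⟫_ℂ = 0} := by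
        apply closure_minimal
        · rintro _ ⟨ξ, rfl⟩; exact step1 ξ w hw
        · exact isClosed_eq
            (Continuous.inner ((C - D).continuous.comp continuous_id) continuous_const)
            continuous_const
      exact hsub hv
    have hEP : P ∘L (C - D) ∘L P = C - D := hPEP C D hC3 hD3
    have hzero : ∀ ξ : H, (C - D) ξ = 0 := by
      intro ξ
      have h2 : ∀ η : H, ⟪(C - D) ξ, η⟫_ℂ = 0 := by
        intro η
        have e1 : (C - D) ξ = P ((C - D) (P ξ)) :=
          (ContinuousLinearMap.ext_iff.mp hEP ξ).symm
        have hmemP : ∀ ζ : H, P ζ ∈ closure (Set.range ⇑d.sqAB) := by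
          intro ζ; rw [← hPrange]; exact Set.mem_range_self ζ
        rw [e1, hPsym]
        exact step2 (P ξ) (hmemP ξ) (P η) (hmemP η)
      exact inner_self_eq_zero.mp (h2 ((C - D) ξ))
    exact sub_eq_zero.mp (ContinuousLinearMap.ext hzero)
  · -- SurjOn
    rintro C ⟨hC1, hC2⟩
    have hCnn : (0 : H →L[ℂ] H) ≤ C := (nonneg_iff_isPositive C).mpr hC1
    set S := CFC.sqrt C with hS
    have hS0 : (0 : H →L[ℂ] H) ≤ S := CFC.sqrt_nonneg (a := C)
    have hSpos : S.IsPositive := (nonneg_iff_isPositive S).mp hS0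
    have hS2 : S ∘L S = C := by
      rw [← ContinuousLinearMap.mul_def]; exact CFC.sqrt_mul_sqrt_self C hCnn
    have hSsym : ∀ a b : H, ⟪S a, b⟫_ℂ = ⟪a, S b⟫_ℂ := fun a b => by
      conv_lhs => rw [← hSpos.isSelfAdjoint.adjoint_eq]
      exact adjoint_inner_left S b a
    have hST : ∀ ξ : H, ‖S ξ‖ ≤ ‖d.sqAB ξ‖ := by
      intro ξ
      have e1 : ‖S ξ‖ ^ 2 = RCLike.re ⟪C ξ, ξ⟫_ℂ := by
        rw [← inner_self_eq_norm_sq (𝕜 := ℂ)]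
        rw [show C ξ = S (S ξ) from (ContinuousLinearMap.ext_iff.mp hS2 ξ).symm, hSsym]
        first | rfl | exact inner_re_symm _ _
      have e2 : ‖d.sqAB ξ‖ ^ 2 = RCLike.re ⟪(A + B) ξ, ξ⟫_ℂ := by
        rw [← inner_self_eq_norm_sq (𝕜 := ℂ)]
        rw [show (A + B) ξ = d.sqAB (d.sqAB ξ) from
          (ContinuousLinearMap.ext_iff.mp d.sqAB_sq ξ).symm, hTsym]
        first | rfl | exact inner_re_symm _ _
      have e3 : RCLike.re ⟪C ξ, ξ⟫_ℂ ≤ RCLike.re ⟪(A + B) ξ, ξ⟫_ℂ := by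
        have h5 : (0 : ℝ) ≤ RCLike.re ⟪(A + B) ξ - C ξ, ξ⟫_ℂ := hC2.2 ξ
        rw [inner_sub_left, map_sub] at h5
        linarith
      refine le_of_pow_le_pow_left₀ two_ne_zero (norm_nonneg _) ?_
      rw [e1, e2]; exact e3
    obtain ⟨W, hW1, hWT, hWP⟩ := douglas_exists S d.sqAB hST P hP
    refine ⟨adjoint W ∘L W, ⟨adjoint_comp_self_pos W, ?_, ?_⟩, ?_⟩
    · refine ⟨isSelfAdjoint_iff_isSymmetric.mp (hPsa.sub (adjoint_comp_self_pos W).isSelfAdjoint), fun ξ => ?_⟩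
      show (0 : ℝ) ≤ RCLike.re ⟪(P - adjoint W ∘L W) ξ, ξ⟫_ℂ
      rw [sub_apply, inner_sub_left, map_sub]
      have k1 : RCLike.re ⟪P ξ, ξ⟫_ℂ = ‖P ξ‖ ^ 2 := by
        conv_lhs => rw [show P ξ = P (P ξ) from
          (ContinuousLinearMap.ext_iff.mp hPidem ξ).symm, hPsym]
        rw [inner_self_eq_norm_sq (𝕜 := ℂ)]
      have k2 := aux_norm_sq W ξ
      have k3 : ‖W ξ‖ ≤ ‖P ξ‖ := by
        rw [show W ξ = W (P ξ) from (ContinuousLinearMap.ext_iff.mp hWP ξ).symm]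
        calc ‖W (P ξ)‖ ≤ ‖W‖ * ‖P ξ‖ := W.le_opNorm _
          _ ≤ 1 * ‖P ξ‖ := mul_le_mul_of_nonneg_right hW1 (norm_nonneg _)
          _ = ‖P ξ‖ := one_mul _
      have k4 : ‖W ξ‖ ^ 2 ≤ ‖P ξ‖ ^ 2 := pow_le_pow_left₀ (norm_nonneg _) k3 2
      rw [k1, k2]
      linarith
    · have hPW : P ∘L adjoint W = adjoint W := by
        have h5 := congrArg (fun X : H →L[ℂ] H => adjoint X) hWP
        simp only [adjoint_comp, hPsa.adjoint_eq] at h5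
        exact h5
      ext ξ
      show P ((adjoint W) (W (P ξ))) = (adjoint W) (W ξ)
      rw [show W (P ξ) = W ξ from ContinuousLinearMap.ext_iff.mp hWP ξ]
      exact ContinuousLinearMap.ext_iff.mp hPW (W ξ)
    · show d.sqAB ∘L (adjoint W ∘L W) ∘L d.sqAB = C
      rw [hconj_comp, hWT, hSpos.isSelfAdjoint.adjoint_eq, hS2]
  · -- order iso
    rintro C ⟨hC1, hC2, hC3⟩ D ⟨hD1, hD2, hD3⟩
    constructor
    · intro h
      rw [← hGamma_sub]
      exact hconj h
    · intro h
      rw [← hGamma_sub] at h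
      refine ⟨hD1.1.sub hC1.1, fun ξ => ?_⟩
      have hE : P ∘L (D - C) ∘L P = D - C := hPEP D C hD3 hC3
      have hcl : ∀ v ∈ closure (Set.range ⇑d.sqAB),
          (0 : ℝ) ≤ RCLike.re ⟪(D - C) v, v⟫_ℂ := by
        intro v hv
        have hsub : closure (Set.range ⇑d.sqAB) ⊆
            {v : H | (0 : ℝ) ≤ RCLike.re ⟪(D - C) v, v⟫_ℂ} := by
          apply closure_minimal
          · rintro _ ⟨η, rfl⟩
            have h5 : (0 : ℝ) ≤
                RCLike.re ⟪(d.sqAB ∘L (D - C) ∘L d.sqAB) η, η⟫_ℂ := h.2 η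
            rw [comp_apply, comp_apply, hTsym] at h5
            exact h5
          · exact isClosed_le continuous_const
              (RCLike.continuous_re.comp
                (Continuous.inner ((D - C).continuous.comp continuous_id) continuous_id))
        exact hsub hv
      show (0 : ℝ) ≤ RCLike.re ⟪(D - C) ξ, ξ⟫_ℂ
      rw [show (D - C) ξ = P ((D - C) (P ξ)) from
        (ContinuousLinearMap.ext_iff.mp hE ξ).symm, hPsym]
      refine hcl (P ξ) ?_
      rw [← hPrange]; exact Set.mem_range_self ξ

end
end

section
/- Let A, B be positive bounded operators on H, K the closure of ran((A+B)^{1/2}), T : H → K given by (A+B)^{1/2}, and Γ(C̃)=T*C̃T. If C̃_λ is an increasing net in {C̃ ∈ B(K) : 0 ≤ C̃ ≤ I} with Γ(C̃_λ) increasing strongly to C ∈ B(H) with 0 ≤ C ≤ A+B, then C̃_λ increases strongly to Γ^{-1}(C). -/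
open ContinuousLinearMap Filter Topology
open scoped InnerProductSpace

noncomputable section

variable {H : Type*} [NormedAddCommGroup H] [InnerProductSpace ℂ H] [CompleteSpace H]

lemma pos_cs {E : H →L[ℂ] H} (hE : E.IsPositive) (x y : H) :
    (RCLike.re ⟪E x, y⟫_ℂ) ^ 2 ≤ RCLike.re ⟪E x, x⟫_ℂ * RCLike.re ⟪E y, y⟫_ℂ := by
  have hsym : RCLike.re ⟪E y, x⟫_ℂ = RCLike.re ⟪E x, y⟫_ℂ := by
    conv_lhs => rw [← (isSelfAdjoint_iff'.mp hE.isSelfAdjoint)]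
    rw [adjoint_inner_left, inner_re_symm]
  have key : ∀ t : ℝ, 0 ≤ RCLike.re ⟪E y, y⟫_ℂ * (t * t) +
      (2 * RCLike.re ⟪E x, y⟫_ℂ) * t + RCLike.re ⟪E x, x⟫_ℂ := by
    intro t
    have h0 := hE.2 (x + (t : ℂ) • y)
    rw [reApplyInnerSelf] at h0
    simp only [map_add, map_smul, inner_add_left, inner_add_right, inner_smul_left,
      inner_smul_right, Complex.conj_ofReal, map_mul, RCLike.ofReal_re, map_ofNat] at h0
    simp only [mul_add, map_add, RCLike.re_to_complex, Complex.re_ofReal_mul] at h0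
    simp only [RCLike.re_to_complex] at hsym ⊢
    rw [hsym] at h0
    ring_nf at h0 ⊢
    linarith [h0]
  have hd := discrim_le_zero key
  rw [discrim] at hd
  nlinarith [hd]

lemma pos_norm_sq_le {E : H →L[ℂ] H} (hE : E.IsPositive)
    (h1 : ((1 : H →L[ℂ] H) - E).IsPositive) (x : H) :
    ‖E x‖ ^ 2 ≤ RCLike.re ⟪E x, x⟫_ℂ := by
  have hcs := pos_cs hE x (E x)
  have hee : RCLike.re ⟪E x, E x⟫_ℂ = ‖E x‖ ^ 2 := by
    rw [inner_self_eq_norm_sq (𝕜 := ℂ)]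
  have h2 : RCLike.re ⟪E (E x), E x⟫_ℂ ≤ ‖E x‖ ^ 2 := by
    have h3 := h1.2 (E x)
    rw [reApplyInnerSelf] at h3
    simp only [sub_apply, ContinuousLinearMap.one_apply, inner_sub_left, map_sub] at h3
    rw [hee] at h3
    linarith
  rcases eq_or_ne (E x) 0 with h | h
  · simp [h]
  · have hpos : 0 < ‖E x‖ ^ 2 := pow_pos (norm_pos_iff.mpr h) 2
    have h4 := hE.2 x
    rw [reApplyInnerSelf] at h4
    have h5 := hE.2 (E x)
    rw [reApplyInnerSelf] at h5
    rw [hee] at hcs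
    nlinarith [hcs, h2, hpos, h4, h5]

lemma pos_norm_le {E : H →L[ℂ] H} (hE : E.IsPositive)
    (h1 : ((1 : H →L[ℂ] H) - E).IsPositive) (x : H) : ‖E x‖ ≤ ‖x‖ := by
  have h2 := pos_norm_sq_le hE h1 x
  have h3 : RCLike.re ⟪E x, x⟫_ℂ ≤ ‖E x‖ * ‖x‖ :=
    (RCLike.re_le_norm _).trans (norm_inner_le_norm _ _)
  rcases eq_or_ne (E x) 0 with h | h
  · simp [h]
  · have hpos : 0 < ‖E x‖ := norm_pos_iff.mpr h
    nlinarith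

/-- If an increasing net `C̃ᵢ` in `{0 ≤ C̃ ≤ 1}` on `K` has `Γ(C̃ᵢ)` increasing strongly
to `C` with `0 ≤ C ≤ A + B`, then `C̃ᵢ` increases strongly to `Γ⁻¹(C)`. -/
theorem stmt2 {ι : Type*} [Preorder ι] [Nonempty ι] [IsDirected ι (· ≤ ·)]
    (A B : H →L[ℂ] H) (hA : A.IsPositive) (hB : B.IsPositive)
    (d : DouglasTuple A B) (P : H →L[ℂ] H) (hP : IsRangeProj d.sqAB P)
    (Ct : ι → H →L[ℂ] H) (C D : H →L[ℂ] H)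
    (hCt : ∀ i, (Ct i).IsPositive ∧ (P - Ct i).IsPositive ∧ P ∘L Ct i ∘L P = Ct i)
    (hmono : ∀ i j, i ≤ j → (Ct j - Ct i).IsPositive)
    (hCpos : C.IsPositive) (hCle : (A + B - C).IsPositive)
    (hDpos : D.IsPositive) (hDle : (P - D).IsPositive) (hDsupp : P ∘L D ∘L P = D)
    (hGD : d.sqAB ∘L D ∘L d.sqAB = C)
    (hub : ∀ i, (C - d.sqAB ∘L Ct i ∘L d.sqAB).IsPositive)
    (hconv : ∀ ξ : H, Tendsto (fun i => (d.sqAB ∘L Ct i ∘L d.sqAB) ξ) atTop (𝓝 (C ξ))) :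
    ∀ ξ : H, Tendsto (fun i => Ct i ξ) atTop (𝓝 (D ξ)) := by
  obtain ⟨Psa, Pidem, Pran⟩ := hP
  set T := d.sqAB with hTdef
  have hTsa : adjoint T = T := isSelfAdjoint_iff'.mp d.sqAB_pos.isSelfAdjoint
  have hPadj : adjoint P = P := isSelfAdjoint_iff'.mp Psa
  -- The projection satisfies ⟪P ξ, ξ⟫ = ‖P ξ‖²
  have hPsq : ∀ ξ : H, RCLike.re ⟪P ξ, ξ⟫_ℂ = ‖P ξ‖ ^ 2 := by
    intro ξ
    have h1 : P (P ξ) = P ξ := by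
      conv_rhs => rw [← Pidem]
      rfl
    calc RCLike.re ⟪P ξ, ξ⟫_ℂ = RCLike.re ⟪P (P ξ), ξ⟫_ℂ := by rw [h1]
      _ = RCLike.re ⟪P ξ, P ξ⟫_ℂ := by
          have h2 := adjoint_inner_left P ξ (P ξ)
          rw [hPadj] at h2
          rw [h2]
      _ = ‖P ξ‖ ^ 2 := by rw [inner_self_eq_norm_sq (𝕜 := ℂ)]
  have hPcontr : ∀ ξ : H, ‖P ξ‖ ≤ ‖ξ‖ := by
    intro ξ
    have h1 : ‖P ξ‖ ^ 2 ≤ ‖P ξ‖ * ‖ξ‖ := by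
      rw [← hPsq ξ]
      exact (RCLike.re_le_norm _).trans (norm_inner_le_norm _ _)
    rcases eq_or_ne (P ξ) 0 with h | h
    · simp [h]
    · have hpos : 0 < ‖P ξ‖ := norm_pos_iff.mpr h
      nlinarith
  have h1P : ((1 : H →L[ℂ] H) - P).IsPositive := by
    refine ⟨((IsSelfAdjoint.one (H →L[ℂ] H)).sub Psa).isSymmetric, fun ξ => ?_⟩
    rw [reApplyInnerSelf]
    simp only [sub_apply, ContinuousLinearMap.one_apply, inner_sub_left, map_sub]
    rw [hPsq, inner_self_eq_norm_sq (𝕜 := ℂ)]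
    have := hPcontr ξ
    nlinarith [norm_nonneg (P ξ), norm_nonneg ξ]
  -- the error operators
  set E : ι → H →L[ℂ] H := fun i => D - Ct i with hEdef
  have hEPEP : ∀ i, P ∘L E i ∘L P = E i := by
    intro i
    simp only [hEdef, sub_comp, comp_sub]
    rw [show P ∘L (D ∘L P) = P ∘L D ∘L P from rfl,
      show P ∘L (Ct i ∘L P) = P ∘L Ct i ∘L P from rfl, hDsupp, (hCt i).2.2]
  have hTE : ∀ i, T ∘L E i ∘L T = C - T ∘L Ct i ∘L T := by
    intro i
    simp only [hEdef, sub_comp, comp_sub]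
    rw [show T ∘L (D ∘L T) = T ∘L D ∘L T from rfl,
      show T ∘L (Ct i ∘L T) = T ∘L Ct i ∘L T from rfl, hGD]
  have hEsa : ∀ i, IsSelfAdjoint (E i) := fun i => hDpos.isSelfAdjoint.sub (hCt i).1.isSelfAdjoint
  -- positivity of E i
  have hEposform : ∀ i (ζ : H), ζ ∈ closure (Set.range ⇑T) → 0 ≤ RCLike.re ⟪E i ζ, ζ⟫_ℂ := by
    intro i ζ hζ
    have hcl : IsClosed {ζ : H | 0 ≤ RCLike.re ⟪E i ζ, ζ⟫_ℂ} :=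
      isClosed_le continuous_const
        (RCLike.continuous_re.comp ((E i).continuous.inner continuous_id))
    refine hcl.closure_subset_iff.mpr ?_ hζ
    rintro _ ⟨η, rfl⟩
    have h1 : ⟪E i (T η), T η⟫_ℂ = ⟪(T ∘L E i ∘L T) η, η⟫_ℂ := by
      rw [show (T ∘L E i ∘L T) η = T (E i (T η)) from rfl]
      have h2 := adjoint_inner_left T η (E i (T η))
      rw [hTsa] at h2
      rw [h2]
    have h2 := (hub i).2 η
    rw [reApplyInnerSelf] at h2
    rw [Set.mem_setOf_eq, h1, hTE i]
    exact h2
  have hEpos : ∀ i, (E i).IsPositive := by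
    intro i
    refine ⟨(hEsa i).isSymmetric, fun ξ => ?_⟩
    rw [reApplyInnerSelf]
    have hmem : P ξ ∈ closure (Set.range ⇑T) := by rw [← Pran]; exact ⟨ξ, rfl⟩
    have h1 : ⟪E i ξ, ξ⟫_ℂ = ⟪E i (P ξ), P ξ⟫_ℂ := by
      conv_lhs => rw [← hEPEP i]
      rw [show (P ∘L E i ∘L P) ξ = P (E i (P ξ)) from rfl]
      have h2 := adjoint_inner_left P ξ (E i (P ξ))
      rw [hPadj] at h2
      rw [h2]
    rw [h1]
    exact hEposform i (P ξ) hmem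
  have hE1 : ∀ i, ((1 : H →L[ℂ] H) - E i).IsPositive := by
    intro i
    have heq : (1 : H →L[ℂ] H) - E i = ((1 : H →L[ℂ] H) - P) + ((P - D) + Ct i) := by
      simp only [hEdef]; abel
    rw [heq]
    exact h1P.add (hDle.add (hCt i).1)
  have hEsqle : ∀ i (ξ : H), ‖E i ξ‖ ^ 2 ≤ RCLike.re ⟪E i ξ, ξ⟫_ℂ :=
    fun i ξ => pos_norm_sq_le (hEpos i) (hE1 i) ξ
  have hEcontr : ∀ i (ξ : H), ‖E i ξ‖ ≤ ‖ξ‖ :=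
    fun i ξ => pos_norm_le (hEpos i) (hE1 i) ξ
  -- convergence on the range of T
  have hr : ∀ η : H, Tendsto (fun i => ‖E i (T η)‖) atTop (𝓝 0) := by
    intro η
    have h1 : Tendsto (fun i => RCLike.re ⟪E i (T η), T η⟫_ℂ) atTop (𝓝 0) := by
      have h2 : ∀ i, RCLike.re ⟪E i (T η), T η⟫_ℂ
          = RCLike.re ⟪C η - (T ∘L Ct i ∘L T) η, η⟫_ℂ := by
        intro i
        have h3 : ⟪E i (T η), T η⟫_ℂ = ⟪(T ∘L E i ∘L T) η, η⟫_ℂ := by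
          rw [show (T ∘L E i ∘L T) η = T (E i (T η)) from rfl]
          have h5 := adjoint_inner_left T η (E i (T η))
          rw [hTsa] at h5
          rw [h5]
        rw [h3, hTE i]
        rfl
      simp only [h2]
      have h4 : Tendsto (fun i => C η - (T ∘L Ct i ∘L T) η) atTop (𝓝 0) := by
        have := (hconv η)
        simpa using (tendsto_const_nhds (x := C η)).sub this
      have h5 : Tendsto (fun i => (⟪C η - (T ∘L Ct i ∘L T) η, η⟫_ℂ)) atTop (𝓝 0) := by
        have := ((continuous_inner (𝕜 := ℂ) (E := H)).tendsto ((0 : H), η)).comp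
          (h4.prodMk_nhds (tendsto_const_nhds (x := η)))
        simpa [Function.comp_def, inner_sub_left] using this
      simpa [Function.comp_def] using (RCLike.continuous_re.tendsto 0).comp h5
    have hb : ∀ i, ‖E i (T η)‖ ≤ Real.sqrt (RCLike.re ⟪E i (T η), T η⟫_ℂ) := by
      intro i
      rw [Real.le_sqrt (norm_nonneg _)]
      · exact hEsqle i (T η)
      · exact (hEpos i).re_inner_nonneg_left _
    have hsq : Tendsto (fun i => Real.sqrt (RCLike.re ⟪E i (T η), T η⟫_ℂ)) atTop (𝓝 0) := by
      have := (Real.continuous_sqrt.tendsto 0).comp h1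
      simpa [Function.comp_def] using this
    exact squeeze_zero (fun i => norm_nonneg _) hb hsq
  -- convergence on the closure of the range of T
  have hlim : ∀ ζ ∈ closure (Set.range ⇑T), Tendsto (fun i => E i ζ) atTop (𝓝 0) := by
    intro ζ hζ
    rw [NormedAddCommGroup.tendsto_nhds_zero]
    intro ε hε
    obtain ⟨w, hw1, hw2⟩ := Metric.mem_closure_iff.mp hζ (ε / 2) (by positivity)
    obtain ⟨η, rfl⟩ := hw1
    rw [dist_eq_norm] at hw2
    filter_upwards [(hr η).eventually_lt_const (by positivity : (0:ℝ) < ε / 2)] with i hi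
    have h1 : E i ζ = E i (ζ - T η) + E i (T η) := by
      rw [← map_add]; congr 1; abel
    calc ‖E i ζ‖ ≤ ‖E i (ζ - T η)‖ + ‖E i (T η)‖ := by rw [h1]; exact norm_add_le _ _
      _ ≤ ‖ζ - T η‖ + ‖E i (T η)‖ := by gcongr; exact hEcontr i _
      _ < ε / 2 + ε / 2 := by gcongr
      _ = ε := by ring
  -- conclusion
  intro ξ
  have hmem : P ξ ∈ closure (Set.range ⇑T) := by rw [← Pran]; exact ⟨ξ, rfl⟩
  have h0 : Tendsto (fun i => E i ξ) atTop (𝓝 0) := by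
    have heq : ∀ i, E i ξ = P (E i (P ξ)) := by
      intro i
      conv_lhs => rw [← hEPEP i]
      rfl
    simp only [heq]
    have := (P.continuous.tendsto 0).comp (hlim (P ξ) hmem)
    simpa [Function.comp_def] using this
  have heq2 : ∀ i, Ct i ξ = D ξ - E i ξ := by
    intro i; simp [hEdef]
  simp only [heq2]
  simpa using (tendsto_const_nhds (x := D ξ)).sub h0

end
end

section
/- Let A, B be positive bounded operators on H, and let Y be the Douglas contraction with Y(A+B)^{1/2} = B^{1/2}, with polar decomposition Y = V|Y|, S = |Y|². If φ(x,y) is homogeneous, bounded on compact sets, and φ(x,y) = y·f(y) on the segment {x+y=1} for some bounded Borel f on [0,1], then the Pusz–Woronowicz functional calculus satisfies φ(A,B) = B^{1/2} V f(S) V* B^{1/2}. Moreover, if f is an indicator function, then V f(S) V* is an orthogonal projection. -/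
set_option maxHeartbeats 1000000
set_option synthInstance.maxHeartbeats 400000
set_option linter.unusedVariables false


open ContinuousLinearMap Filter Topology
open scoped InnerProductSpace

noncomputable section

variable {H : Type*} [NormedAddCommGroup H] [InnerProductSpace ℂ H] [CompleteSpace H]

namespace PWaux

lemma sqrt_unique' {A S₁ S₂ : H →L[ℂ] H} (h1 : S₁.IsPositive) (h2 : S₂.IsPositive)
    (e1 : S₁ ∘L S₁ = A) (e2 : S₂ ∘L S₂ = A) : S₁ = S₂ := by
  have h1' : 0 ≤ S₁ := (nonneg_iff_isPositive S₁).mpr h1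
  have h2' : 0 ≤ S₂ := (nonneg_iff_isPositive S₂).mpr h2
  rw [← CFC.sqrt_unique (a := A) (b := S₁) (by rw [← e1]; rfl) h1',
      CFC.sqrt_unique (a := A) (b := S₂) (by rw [← e2]; rfl) h2']

lemma isPos_adj_self (X : H →L[ℂ] H) : (adjoint X ∘L X).IsPositive := by
  have := (isPositive_one (E := H)).adjoint_conj X
  simpa [one_def] using this

lemma one_sub_pos {X : H →L[ℂ] H} (hX : ‖X‖ ≤ 1) :
    ((1 : H →L[ℂ] H) - adjoint X ∘L X).IsPositive := by
  constructor
  · exact IsSelfAdjoint.isSymmetric ((IsSelfAdjoint.one (R := H →L[ℂ] H)).sub (isPos_adj_self X).isSelfAdjoint)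
  · intro ξ
    have h1 : ((1 : H →L[ℂ] H) - adjoint X ∘L X) ξ = ξ - adjoint X (X ξ) := rfl
    have h2 : ⟪adjoint X (X ξ), ξ⟫_ℂ = ⟪X ξ, X ξ⟫_ℂ := adjoint_inner_left X ξ (X ξ)
    have : ((1 : H →L[ℂ] H) - adjoint X ∘L X).reApplyInnerSelf ξ = ‖ξ‖ ^ 2 - ‖X ξ‖ ^ 2 := by
      rw [reApplyInnerSelf_apply, h1, inner_sub_left, h2, map_sub]
      rw [inner_self_eq_norm_sq (𝕜 := ℂ), inner_self_eq_norm_sq (𝕜 := ℂ)]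
    rw [this]
    have hx : ‖X ξ‖ ≤ ‖ξ‖ := by
      calc ‖X ξ‖ ≤ ‖X‖ * ‖ξ‖ := X.le_opNorm ξ
      _ ≤ 1 * ‖ξ‖ := by gcongr
      _ = ‖ξ‖ := one_mul _
    nlinarith [norm_nonneg (X ξ), norm_nonneg ξ]

lemma spec01 {T : H →L[ℂ] H} (hT : T.IsPositive) (hT1 : ((1 : H →L[ℂ] H) - T).IsPositive)
    {x : ℝ} (hx : (x : ℂ) ∈ spectrum ℂ T) : x ∈ Set.Icc (0 : ℝ) 1 := by
  have hx' : x ∈ spectrum ℝ T := by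
    rwa [show ((x : ℂ)) = algebraMap ℝ ℂ x from rfl, spectrum.algebraMap_mem_iff] at hx
  refine ⟨spectrum_nonneg_of_nonneg ((nonneg_iff_isPositive T).mpr hT) hx', ?_⟩
  have h1x : (1 - x) ∈ spectrum ℝ ((1 : H →L[ℂ] H) - T) := by
    have h := spectrum.singleton_sub_eq T (1 : ℝ)
    rw [map_one] at h
    rw [← h]
    exact Set.sub_mem_sub rfl hx'
  have := spectrum_nonneg_of_nonneg ((nonneg_iff_isPositive _).mpr hT1) h1x
  linarith

lemma isPositive_sq {Aop : H →L[ℂ] H} (ha : IsSelfAdjoint Aop) : (Aop ∘L Aop).IsPositive := by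
  have h := isPos_adj_self Aop
  rwa [ha.adjoint_eq] at h

/-- clamp to `[0,1]` -/
def projI (x : ℝ) : ℝ := max 0 (min 1 x)

lemma projI_mem (x : ℝ) : projI x ∈ Set.Icc (0 : ℝ) 1 :=
  ⟨le_max_left _ _, max_le (by norm_num) (min_le_left _ _)⟩

lemma projI_eq {x : ℝ} (hx : x ∈ Set.Icc (0 : ℝ) 1) : projI x = x := by
  rcases hx with ⟨h0, h1⟩
  simp [projI, min_eq_right h1, max_eq_right h0]

lemma continuous_projI : Continuous projI :=
  continuous_const.max (continuous_const.min continuous_id)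

lemma measurable_projI : Measurable projI := continuous_projI.measurable

lemma sand_master (T R S : H →L[ℂ] H) (Φ Φ₂ : (ℝ → ℝ) → H →L[ℂ] H)
    (hΦ : IsBorelCalc S Φ) (hΦ₂ : IsBorelCalc R Φ₂)
    (hspecS : ∀ x : ℝ, (x : ℂ) ∈ spectrum ℂ S → x ∈ Set.Icc (0:ℝ) 1)
    (hspecR : ∀ x : ℝ, (x : ℂ) ∈ spectrum ℂ R → x ∈ Set.Icc (0:ℝ) 1)
    (hRT : (R + S) ∘L T = T) (hRS : (R + S) ∘L S = S)
    (h : ℝ → ℝ) (hh : Measurable h)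
    (hhb : ∃ M : ℝ, ∀ x ∈ Set.Icc (0:ℝ) 1, |h x| ≤ M) :
    T ∘L Φ₂ (fun x => h (1 - x)) ∘L T = T ∘L Φ h ∘L T := by
  obtain ⟨Φadd, Φmul, Φsmul, Φone, Φid, Φsa, Φspec, Φlim⟩ := hΦ
  obtain ⟨Ψadd, Ψmul, Ψsmul, Ψone, Ψid, Ψsa, Ψspec, Ψlim⟩ := hΦ₂
  have hcomp : ∀ g : ℝ → ℝ, Measurable g → Measurable (fun x => g (1 - x)) :=
    fun g hg => hg.comp (measurable_const.sub measurable_id)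
  -- congruence on [0,1]
  have sandCongr : ∀ g₁ g₂ : ℝ → ℝ, Measurable g₁ → Measurable g₂ →
      (∀ x ∈ Set.Icc (0:ℝ) 1, g₁ x = g₂ x) →
      T ∘L Φ₂ (fun x => g₁ (1 - x)) ∘L T = T ∘L Φ g₁ ∘L T →
      T ∘L Φ₂ (fun x => g₂ (1 - x)) ∘L T = T ∘L Φ g₂ ∘L T := by
    intro g₁ g₂ m₁ m₂ heq hs
    have e1 : Φ g₁ = Φ g₂ := Φspec _ _ m₁ m₂ fun x hx => heq x (hspecS x hx)
    have e2 : Φ₂ (fun x => g₁ (1 - x)) = Φ₂ (fun x => g₂ (1 - x)) := by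
      refine Ψspec _ _ (hcomp _ m₁) (hcomp _ m₂) fun x hx => ?_
      rcases hspecR x hx with ⟨h0, h1⟩
      exact heq (1 - x) ⟨by linarith, by linarith⟩
    rw [← e1, ← e2]; exact hs
  have sandAdd : ∀ g₁ g₂ : ℝ → ℝ, Measurable g₁ → Measurable g₂ →
      T ∘L Φ₂ (fun x => g₁ (1 - x)) ∘L T = T ∘L Φ g₁ ∘L T →
      T ∘L Φ₂ (fun x => g₂ (1 - x)) ∘L T = T ∘L Φ g₂ ∘L T →
      T ∘L Φ₂ (fun x => g₁ (1 - x) + g₂ (1 - x)) ∘L T = T ∘L Φ (g₁ + g₂) ∘L T := by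
    intro g₁ g₂ m₁ m₂ h₁ h₂
    have e1 : Φ (g₁ + g₂) = Φ g₁ + Φ g₂ := Φadd _ _ m₁ m₂
    have e2 : Φ₂ (fun x => g₁ (1 - x) + g₂ (1 - x)) =
        Φ₂ (fun x => g₁ (1 - x)) + Φ₂ (fun x => g₂ (1 - x)) :=
      Ψadd _ _ (hcomp _ m₁) (hcomp _ m₂)
    rw [e1, e2, add_comp, add_comp, comp_add, comp_add, h₁, h₂]
  have sandSmul : ∀ (c : ℝ) (g : ℝ → ℝ), Measurable g →
      T ∘L Φ₂ (fun x => g (1 - x)) ∘L T = T ∘L Φ g ∘L T →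
      T ∘L Φ₂ (fun x => c * g (1 - x)) ∘L T = T ∘L Φ (c • g) ∘L T := by
    intro c g m hg
    have e1 : Φ (c • g) = (c : ℂ) • Φ g := Φsmul _ _ m
    have e2 : Φ₂ (fun x => c * g (1 - x)) = (c : ℂ) • Φ₂ (fun x => g (1 - x)) :=
      Ψsmul c _ (hcomp _ m)
    rw [e1, e2, smul_comp, smul_comp, comp_smul, comp_smul, hg]
  have sandConst : ∀ c : ℝ,
      T ∘L Φ₂ (fun _ => c) ∘L T = T ∘L Φ (fun _ => c) ∘L T := by
    intro c
    have hc1 : (fun _ : ℝ => c) = c • (fun _ : ℝ => (1:ℝ)) := by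
      funext x; simp
    have e1 : Φ (fun _ : ℝ => c) = (c : ℂ) • 1 := by
      rw [hc1, Φsmul _ _ measurable_const, Φone]
    have e2 : Φ₂ (fun _ : ℝ => c) = (c : ℂ) • 1 := by
      rw [hc1, Ψsmul _ _ measurable_const, Ψone]
    rw [e1, e2]
  -- power functions
  have ΦPow : ∀ n : ℕ, Φ (fun x => x ^ n) = S ^ n := by
    intro n
    induction n with
    | zero =>
      rw [show (fun x : ℝ => x ^ 0) = fun _ : ℝ => (1:ℝ) from funext fun x => pow_zero x,
        Φone, pow_zero]
    | succ n ih =>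
      have e : (fun x : ℝ => x ^ (n+1)) = (fun x : ℝ => x ^ n) * (_root_.id : ℝ → ℝ) := by
        funext x; show x^(n+1) = x^n * x; ring
      rw [e, Φmul (fun x => x ^ n) _root_.id (measurable_id.pow_const n) measurable_id, ih, Φid,
        pow_succ, mul_def]
  have ΨOneSub : Φ₂ (fun x : ℝ => 1 - x) = 1 - R := by
    have e : (fun x : ℝ => 1 - x) = (fun _ : ℝ => (1:ℝ)) + (-1:ℝ) • (_root_.id : ℝ → ℝ) := by
      funext x; show (1:ℝ) - x = 1 + (-1) * x; ring
    rw [e, Ψadd (fun _ => (1:ℝ)) ((-1:ℝ) • _root_.id) measurable_const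
      (measurable_id.const_smul (-1)), Ψone, Ψsmul (-1) _root_.id measurable_id, Ψid]
    simp [neg_smul, sub_eq_add_neg]
  have ΨPowS : ∀ n : ℕ, Φ₂ (fun x : ℝ => (1 - x) ^ n) = (1 - R) ^ n := by
    intro n
    induction n with
    | zero =>
      rw [show (fun x : ℝ => (1 - x) ^ 0) = fun _ : ℝ => (1:ℝ) from funext fun x => pow_zero _,
        Ψone, pow_zero]
    | succ n ih =>
      have e : (fun x : ℝ => (1 - x) ^ (n+1)) =
          (fun x : ℝ => (1 - x) ^ n) * (fun x : ℝ => 1 - x) := by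
        funext x; show (1-x)^(n+1) = (1-x)^n * (1-x); ring
      rw [e, Ψmul (fun x => (1 - x) ^ n) (fun x => 1 - x)
        ((measurable_const.sub measurable_id).pow_const n)
        (measurable_const.sub measurable_id), ih, ΨOneSub, pow_succ, mul_def]
  have key1 : ((1 : H →L[ℂ] H) - R) ∘L T = S ∘L T := by
    have e := hRT
    rw [add_comp] at e
    rw [sub_comp, one_def, id_comp]
    exact sub_eq_of_eq_add' e.symm
  have key2 : ((1 : H →L[ℂ] H) - R) ∘L S = S ∘L S := by
    have e := hRS
    rw [add_comp] at e
    rw [sub_comp, one_def, id_comp]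
    exact sub_eq_of_eq_add' e.symm
  have keynS : ∀ n : ℕ, (((1 : H →L[ℂ] H) - R) ^ n) ∘L S = (S ^ n) ∘L S := by
    intro n
    induction n with
    | zero => rw [pow_zero, pow_zero]
    | succ n ih =>
      calc (((1 : H →L[ℂ] H) - R) ^ (n+1)) ∘L S
          = ((((1 : H →L[ℂ] H) - R) ^ n) ∘L ((1 : H →L[ℂ] H) - R)) ∘L S := by
            rw [pow_succ, mul_def]
        _ = (((1 : H →L[ℂ] H) - R) ^ n) ∘L (((1 : H →L[ℂ] H) - R) ∘L S) := comp_assoc _ _ _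
        _ = (((1 : H →L[ℂ] H) - R) ^ n) ∘L (S ∘L S) := by rw [key2]
        _ = ((((1 : H →L[ℂ] H) - R) ^ n) ∘L S) ∘L S := (comp_assoc _ _ _).symm
        _ = ((S ^ n) ∘L S) ∘L S := by rw [ih]
        _ = (S ^ (n+1)) ∘L S := by rw [pow_succ, mul_def, comp_assoc]
  have keynT : ∀ n : ℕ, (((1 : H →L[ℂ] H) - R) ^ n) ∘L T = (S ^ n) ∘L T := by
    intro n
    induction n with
    | zero => rw [pow_zero, pow_zero]
    | succ n ih =>
      calc (((1 : H →L[ℂ] H) - R) ^ (n+1)) ∘L T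
          = ((((1 : H →L[ℂ] H) - R) ^ n) ∘L ((1 : H →L[ℂ] H) - R)) ∘L T := by
            rw [pow_succ, mul_def]
        _ = (((1 : H →L[ℂ] H) - R) ^ n) ∘L (((1 : H →L[ℂ] H) - R) ∘L T) := comp_assoc _ _ _
        _ = (((1 : H →L[ℂ] H) - R) ^ n) ∘L (S ∘L T) := by rw [key1]
        _ = ((((1 : H →L[ℂ] H) - R) ^ n) ∘L S) ∘L T := (comp_assoc _ _ _).symm
        _ = ((S ^ n) ∘L S) ∘L T := by rw [keynS]
        _ = (S ^ (n+1)) ∘L T := by rw [pow_succ, mul_def, comp_assoc]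
  have sandPow : ∀ n : ℕ,
      T ∘L Φ₂ (fun x => (1 - x) ^ n) ∘L T = T ∘L Φ (fun x => x ^ n) ∘L T := by
    intro n
    rw [ΨPowS n, ΦPow n, keynT n]
  -- limits
  have sandLim : ∀ (gn : ℕ → ℝ → ℝ) (g : ℝ → ℝ) (M : ℝ),
      (∀ n, Measurable (gn n)) → Measurable g → (∀ n x, |gn n x| ≤ M) →
      (∀ x, Tendsto (fun n => gn n x) atTop (𝓝 (g x))) →
      (∀ n, T ∘L Φ₂ (fun x => gn n (1 - x)) ∘L T = T ∘L Φ (gn n) ∘L T) →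
      T ∘L Φ₂ (fun x => g (1 - x)) ∘L T = T ∘L Φ g ∘L T := by
    intro gn g M mgn mg hbd hconv hsand
    ext ξ
    have l1 : Tendsto (fun n => T (Φ₂ (fun x => gn n (1 - x)) (T ξ))) atTop
        (𝓝 (T (Φ₂ (fun x => g (1 - x)) (T ξ)))) :=
      (T.continuous.tendsto _).comp (Ψlim _ _ M (fun n => hcomp _ (mgn n)) (hcomp _ mg)
        (fun n x => hbd n (1 - x)) (fun x => hconv (1 - x)) (T ξ))
    have l2 : Tendsto (fun n => T (Φ (gn n) (T ξ))) atTop (𝓝 (T (Φ g (T ξ)))) :=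
      (T.continuous.tendsto _).comp (Φlim _ _ M mgn mg hbd hconv (T ξ))
    have l1' : Tendsto (fun n => T (Φ (gn n) (T ξ))) atTop
        (𝓝 (T (Φ₂ (fun x => g (1 - x)) (T ξ)))) := by
      refine l1.congr fun n => ?_
      exact ContinuousLinearMap.ext_iff.mp (hsand n) ξ
    exact tendsto_nhds_unique l1' l2
  -- polynomials
  have sandPoly : ∀ p : Polynomial ℝ,
      T ∘L Φ₂ (fun x => Polynomial.eval (1 - x) p) ∘L T
        = T ∘L Φ (fun x => Polynomial.eval x p) ∘L T := by
    intro p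
    induction p using Polynomial.induction_on' with
    | add p q hp hq =>
      have e1 : (fun x : ℝ => Polynomial.eval (1 - x) (p + q)) =
          fun x => Polynomial.eval (1 - x) p + Polynomial.eval (1 - x) q :=
        funext fun x => Polynomial.eval_add
      have e2 : (fun x : ℝ => Polynomial.eval x (p + q)) =
          (fun x => Polynomial.eval x p) + fun x => Polynomial.eval x q :=
        funext fun x => Polynomial.eval_add
      rw [e1, e2]
      exact sandAdd _ _ (p.continuous.measurable) (q.continuous.measurable) hp hq
    | monomial n a =>
      have e1 : (fun x : ℝ => Polynomial.eval (1 - x) (Polynomial.monomial n a)) =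
          fun x => a * (1 - x) ^ n := funext fun x => Polynomial.eval_monomial
      have e2 : (fun x : ℝ => Polynomial.eval x (Polynomial.monomial n a)) =
          a • fun x : ℝ => x ^ n := funext fun x => Polynomial.eval_monomial
      rw [e1, e2]
      exact sandSmul a _ (measurable_id.pow_const n) (sandPow n)
  -- continuous functions, clamped
  have sandCont : ∀ g : ℝ → ℝ, Continuous g →
      T ∘L Φ₂ (fun x => g (projI (1 - x))) ∘L T = T ∘L Φ (fun x => g (projI x)) ∘L T := by
    intro g hg
    set G : C(Set.Icc (0:ℝ) 1, ℝ) := ContinuousMap.restrict (Set.Icc (0:ℝ) 1) ⟨g, hg⟩ with hG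
    have hdense : G ∈ closure ((polynomialFunctions (Set.Icc (0:ℝ) 1)) :
        Set C(Set.Icc (0:ℝ) 1, ℝ)) := by
      have hd := polynomialFunctions_closure_eq_top (0:ℝ) 1
      rw [← Subalgebra.topologicalClosure_coe, hd]
      exact Set.mem_univ G
    have happrox : ∀ n : ℕ, ∃ q : Polynomial ℝ,
        ∀ y : Set.Icc (0:ℝ) 1, |Polynomial.eval (y : ℝ) q - G y| ≤ 1 / (n + 1) := by
      intro n
      obtain ⟨b, hbmem, hbdist⟩ := Metric.mem_closure_iff.mp hdense (1 / (n + 1))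
        (by positivity)
      obtain ⟨q, -, hq⟩ := Subalgebra.mem_map.mp hbmem
      refine ⟨q, fun y => ?_⟩
      have h1 : dist (G y) (b y) ≤ dist G b := ContinuousMap.dist_apply_le_dist y
      have h2 : b y = Polynomial.eval (y : ℝ) q := by rw [← hq]; rfl
      rw [Real.dist_eq] at h1
      rw [abs_sub_comm, ← h2]
      exact h1.trans hbdist.le
    choose qs hqs using happrox
    have normG : ∀ y : Set.Icc (0:ℝ) 1, |G y| ≤ ‖G‖ := fun y => G.norm_coe_le_norm y
    have hGval : ∀ x : ℝ, G ⟨projI x, projI_mem x⟩ = g (projI x) := fun x => rfl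
    refine sandLim (fun n x => Polynomial.eval (projI x) (qs n)) (fun x => g (projI x))
      (‖G‖ + 1) (fun n => ((qs n).continuous.comp continuous_projI).measurable)
      ((hg.comp continuous_projI).measurable) ?_ ?_ ?_
    · intro n x
      have h1 := hqs n ⟨projI x, projI_mem x⟩
      rw [hGval x] at h1
      have h2 : |g (projI x)| ≤ ‖G‖ := by rw [← hGval x]; exact normG _
      have h3 : (1:ℝ) / (n + 1) ≤ 1 := by
        rw [div_le_one (by positivity)]; push_cast; linarith [Nat.cast_nonneg (α := ℝ) n]
      calc |Polynomial.eval (projI x) (qs n)|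
          ≤ |Polynomial.eval (projI x) (qs n) - g (projI x)| + |g (projI x)| := by
            have := abs_sub_abs_le_abs_sub (Polynomial.eval (projI x) (qs n)) (g (projI x))
            linarith [abs_sub (Polynomial.eval (projI x) (qs n)) (g (projI x))]
        _ ≤ 1 + ‖G‖ := add_le_add (h1.trans h3) h2
        _ = ‖G‖ + 1 := by ring
    · intro x
      rw [tendsto_iff_dist_tendsto_zero]
      refine squeeze_zero (fun n => dist_nonneg) (fun n => ?_)
        tendsto_one_div_add_atTop_nhds_zero_nat
      have h1 := hqs n ⟨projI x, projI_mem x⟩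
      rw [hGval x] at h1
      rwa [Real.dist_eq]
    · intro n
      refine sandCongr (fun x => Polynomial.eval x (qs n)) (fun x => Polynomial.eval (projI x) (qs n))
        ((qs n).continuous.measurable) (((qs n).continuous.comp continuous_projI).measurable)
        (fun x hx => by
          show Polynomial.eval x (qs n) = Polynomial.eval (projI x) (qs n)
          rw [projI_eq hx]) ?_
      exact sandPoly (qs n)
  -- indicators of rays
  have sandIio : ∀ a : ℝ,
      T ∘L Φ₂ (fun x => Set.indicator (Set.Iio a) (fun _ => (1:ℝ)) (1 - x)) ∘L T
        = T ∘L Φ (Set.indicator (Set.Iio a) (fun _ => (1:ℝ))) ∘L T := by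
    intro a
    set gna : ℕ → ℝ → ℝ := fun n x => max 0 (min 1 ((n + 1) * (a - x))) with hgna
    have gcont : ∀ n, Continuous (gna n) :=
      fun n => continuous_const.max (continuous_const.min
        (continuous_const.mul (continuous_const.sub continuous_id)))
    have gbd : ∀ n x, |gna n x| ≤ 1 := by
      intro n x
      rw [abs_le]
      constructor
      · have := le_max_left (0:ℝ) (min 1 ((n + 1) * (a - x))); linarith
      · exact max_le (by norm_num) (min_le_left _ _)
    have gsand : ∀ n, T ∘L Φ₂ (fun x => gna n (1 - x)) ∘L T = T ∘L Φ (gna n) ∘L T := by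
      intro n
      refine sandCongr (fun x => gna n (projI x)) (gna n)
        ((gcont n).comp continuous_projI).measurable (gcont n).measurable
        (fun x hx => by show gna n (projI x) = gna n x; rw [projI_eq hx]) ?_
      exact sandCont (gna n) (gcont n)
    have gconv : ∀ x, Tendsto (fun n => gna n x)
        atTop (𝓝 (Set.indicator (Set.Iio a) (fun _ => (1:ℝ)) x)) := by
      intro x
      by_cases hx : x < a
      · have hev : ∀ᶠ n : ℕ in atTop, gna n x = 1 := by
          filter_upwards [eventually_ge_atTop ⌈(a - x)⁻¹⌉₊] with n hn
          have hax : 0 < a - x := by linarith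
          have h1 : (a - x)⁻¹ ≤ (n:ℝ) := le_trans (Nat.le_ceil _) (Nat.cast_le.mpr hn)
          have h2 : (1:ℝ) ≤ ((n:ℝ) + 1) * (a - x) := by
            have h3 : (a - x)⁻¹ * (a - x) ≤ ((n:ℝ) + 1) * (a - x) := by
              apply mul_le_mul_of_nonneg_right _ hax.le
              linarith
            rwa [inv_mul_cancel₀ hax.ne'] at h3
          show max 0 (min 1 ((n + 1 : ℝ) * (a - x))) = 1
          rw [min_eq_left h2, max_eq_right zero_le_one]
        have : Set.indicator (Set.Iio a) (fun _ => (1:ℝ)) x = 1 :=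
          Set.indicator_of_mem (show x ∈ Set.Iio a from hx) _
        rw [this]
        exact tendsto_const_nhds.congr' (hev.mono fun n h => h.symm)
      · have hval : ∀ n : ℕ, gna n x = 0 := by
          intro n
          have hax : a - x ≤ 0 := by linarith [not_lt.mp hx]
          have h1 : ((n:ℝ) + 1) * (a - x) ≤ 0 :=
            mul_nonpos_of_nonneg_of_nonpos (by positivity) hax
          show max 0 (min 1 ((n + 1 : ℝ) * (a - x))) = 0
          rw [max_eq_left ((min_le_right _ _).trans h1)]
        have : Set.indicator (Set.Iio a) (fun _ => (1:ℝ)) x = 0 :=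
          Set.indicator_of_notMem (show x ∉ Set.Iio a from hx) _
        rw [this]
        exact tendsto_const_nhds.congr fun n => (hval n).symm
    exact sandLim gna _ 1 (fun n => (gcont n).measurable)
      ((measurable_const.indicator measurableSet_Iio)) gbd gconv gsand
  -- all measurable sets, via the Dynkin π-λ theorem
  have sandInd : ∀ s : Set ℝ, MeasurableSet s →
      T ∘L Φ₂ (fun x => Set.indicator s (fun _ => (1:ℝ)) (1 - x)) ∘L T
        = T ∘L Φ (Set.indicator s (fun _ => (1:ℝ))) ∘L T := by
    have hgen : (inferInstance : MeasurableSpace ℝ)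
        = MeasurableSpace.generateFrom (Set.range Set.Iio) := by
      rw [BorelSpace.measurable_eq (α := ℝ)]
      exact borel_eq_generateFrom_Iio ℝ
    intro s hs
    refine MeasurableSpace.induction_on_inter
      (C := fun t _ => T ∘L Φ₂ (fun x => Set.indicator t (fun _ => (1:ℝ)) (1 - x)) ∘L T
        = T ∘L Φ (Set.indicator t (fun _ => (1:ℝ))) ∘L T)
      hgen isPiSystem_Iio ?_ ?_ ?_ ?_ s hs
    · show T ∘L Φ₂ (fun x => Set.indicator (∅ : Set ℝ) (fun _ => (1:ℝ)) (1 - x)) ∘L T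
        = T ∘L Φ (Set.indicator (∅ : Set ℝ) (fun _ => (1:ℝ))) ∘L T
      have e : Set.indicator (∅ : Set ℝ) (fun _ => (1:ℝ)) = fun _ : ℝ => (0:ℝ) := by
        funext x; simp
      rw [e]
      exact sandConst 0
    · rintro t ⟨a, rfl⟩
      exact sandIio a
    · intro t htm hSand
      have e : Set.indicator tᶜ (fun _ => (1:ℝ))
          = (fun _ => (1:ℝ)) + (-1:ℝ) • Set.indicator t (fun _ => (1:ℝ)) := by
        funext x; by_cases hx : x ∈ t <;> simp [Set.indicator, hx]
      show T ∘L Φ₂ (fun x => Set.indicator tᶜ (fun _ => (1:ℝ)) (1 - x)) ∘L T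
        = T ∘L Φ (Set.indicator tᶜ (fun _ => (1:ℝ))) ∘L T
      rw [e]
      exact sandAdd (fun _ => (1:ℝ)) ((-1:ℝ) • Set.indicator t (fun _ => (1:ℝ)))
        measurable_const ((measurable_const.indicator htm).const_smul (-1))
        (sandConst 1)
        (sandSmul (-1) (Set.indicator t (fun _ => (1:ℝ)))
          (measurable_const.indicator htm) hSand)
    · intro F hdisj hFm hF
      have mInd : ∀ k : ℕ, Measurable (Set.indicator (F k) (fun _ => (1:ℝ))) :=
        fun k => measurable_const.indicator (hFm k)
      have mFn : ∀ n : ℕ,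
          Measurable (fun x => ∑ k ∈ Finset.range n,
            Set.indicator (F k) (fun _ => (1:ℝ)) x) :=
        fun n => Finset.measurable_sum _ fun k _ => mInd k
      have sandFn : ∀ n : ℕ,
          T ∘L Φ₂ (fun x => ∑ k ∈ Finset.range n,
              Set.indicator (F k) (fun _ => (1:ℝ)) (1 - x)) ∘L T
            = T ∘L Φ (fun x => ∑ k ∈ Finset.range n,
              Set.indicator (F k) (fun _ => (1:ℝ)) x) ∘L T := by
        intro n
        induction n with
        | zero =>
          have e₂ : (fun x : ℝ => ∑ k ∈ Finset.range 0,
              Set.indicator (F k) (fun _ => (1:ℝ)) (1 - x)) = fun _ : ℝ => (0:ℝ) := by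
            funext x; simp
          have e₁ : (fun x : ℝ => ∑ k ∈ Finset.range 0,
              Set.indicator (F k) (fun _ => (1:ℝ)) x) = fun _ : ℝ => (0:ℝ) := by
            funext x; simp
          rw [e₁, e₂]
          exact sandConst 0
        | succ n ih =>
          have e₂ : (fun x : ℝ => ∑ k ∈ Finset.range (n+1),
              Set.indicator (F k) (fun _ => (1:ℝ)) (1 - x))
              = fun x : ℝ => (∑ k ∈ Finset.range n,
                Set.indicator (F k) (fun _ => (1:ℝ)) (1 - x))
                + Set.indicator (F n) (fun _ => (1:ℝ)) (1 - x) :=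
            funext fun x => Finset.sum_range_succ _ n
          have e₁ : (fun x : ℝ => ∑ k ∈ Finset.range (n+1),
              Set.indicator (F k) (fun _ => (1:ℝ)) x)
              = fun x : ℝ => (∑ k ∈ Finset.range n,
                Set.indicator (F k) (fun _ => (1:ℝ)) x)
                + Set.indicator (F n) (fun _ => (1:ℝ)) x :=
            funext fun x => Finset.sum_range_succ _ n
          rw [e₁, e₂]
          exact sandAdd (fun x => ∑ k ∈ Finset.range n,
              Set.indicator (F k) (fun _ => (1:ℝ)) x)
            (Set.indicator (F n) (fun _ => (1:ℝ))) (mFn n) (mInd n) ih (hF n)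
      have hFb : ∀ (n : ℕ) (x : ℝ),
          |∑ k ∈ Finset.range n, Set.indicator (F k) (fun _ => (1:ℝ)) x| ≤ 1 := by
        intro n x
        have hnn : ∀ k : ℕ, 0 ≤ Set.indicator (F k) (fun _ => (1:ℝ)) x :=
          fun k => Set.indicator_nonneg (fun _ _ => zero_le_one) x
        rw [abs_le]
        constructor
        · have : (0:ℝ) ≤ ∑ k ∈ Finset.range n, Set.indicator (F k) (fun _ => (1:ℝ)) x :=
            Finset.sum_nonneg fun k _ => hnn k
          linarith
        · by_cases hx : ∃ k ∈ Finset.range n, x ∈ F k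
          · obtain ⟨k₀, hk₀mem, hk₀⟩ := hx
            have : ∑ k ∈ Finset.range n, Set.indicator (F k) (fun _ => (1:ℝ)) x
                = Set.indicator (F k₀) (fun _ => (1:ℝ)) x := by
              refine Finset.sum_eq_single_of_mem k₀ hk₀mem fun j _ hj => ?_
              have : x ∉ F j := fun hxj =>
                (Set.disjoint_left.mp (hdisj hj) hxj) hk₀
              exact Set.indicator_of_notMem this _
            rw [this, Set.indicator_of_mem hk₀]
          · push_neg at hx
            have : ∑ k ∈ Finset.range n, Set.indicator (F k) (fun _ => (1:ℝ)) x = 0 :=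
              Finset.sum_eq_zero fun k hk => Set.indicator_of_notMem (hx k hk) _
            rw [this]; norm_num
      have hFconv : ∀ x : ℝ,
          Tendsto (fun n => ∑ k ∈ Finset.range n, Set.indicator (F k) (fun _ => (1:ℝ)) x)
            atTop (𝓝 (Set.indicator (⋃ i, F i) (fun _ => (1:ℝ)) x)) := by
        intro x
        by_cases hx : x ∈ ⋃ i, F i
        · obtain ⟨i₀, hi₀⟩ := Set.mem_iUnion.mp hx
          have hev : ∀ᶠ n : ℕ in atTop,
              (∑ k ∈ Finset.range n, Set.indicator (F k) (fun _ => (1:ℝ)) x) = 1 := by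
            filter_upwards [eventually_ge_atTop (i₀ + 1)] with n hn
            have hmem : i₀ ∈ Finset.range n := Finset.mem_range.mpr (by omega)
            have : ∑ k ∈ Finset.range n, Set.indicator (F k) (fun _ => (1:ℝ)) x
                = Set.indicator (F i₀) (fun _ => (1:ℝ)) x := by
              refine Finset.sum_eq_single_of_mem i₀ hmem fun j _ hj => ?_
              have : x ∉ F j := fun hxj =>
                (Set.disjoint_left.mp (hdisj hj) hxj) hi₀
              exact Set.indicator_of_notMem this _
            rw [this, Set.indicator_of_mem hi₀]
          rw [Set.indicator_of_mem hx]
          exact tendsto_const_nhds.congr' (hev.mono fun n h => h.symm)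
        · have hnot : ∀ i, x ∉ F i := fun i hxi => hx (Set.mem_iUnion.mpr ⟨i, hxi⟩)
          have hval : ∀ n : ℕ,
              (∑ k ∈ Finset.range n, Set.indicator (F k) (fun _ => (1:ℝ)) x) = 0 :=
            fun n => Finset.sum_eq_zero fun k _ => Set.indicator_of_notMem (hnot k) _
          rw [Set.indicator_of_notMem hx]
          exact tendsto_const_nhds.congr fun n => (hval n).symm
      exact sandLim _ _ 1 mFn
        (measurable_const.indicator (MeasurableSet.iUnion hFm)) hFb hFconv sandFn
  -- simple functions
  have sandSimple : ∀ g : MeasureTheory.SimpleFunc ℝ ℝ,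
      T ∘L Φ₂ (fun x => g (1 - x)) ∘L T = T ∘L Φ (fun x => g x) ∘L T := by
    intro g
    induction g using MeasureTheory.SimpleFunc.induction with
    | @const c s hs =>
      have e : ⇑(MeasureTheory.SimpleFunc.piecewise s hs
          (MeasureTheory.SimpleFunc.const ℝ c) (MeasureTheory.SimpleFunc.const ℝ 0))
          = fun x => c * Set.indicator s (fun _ => (1:ℝ)) x := by
        funext x
        by_cases hx : x ∈ s <;>
          simp [MeasureTheory.SimpleFunc.coe_piecewise, Set.piecewise, Set.indicator, hx]
      rw [e]
      exact sandSmul c (Set.indicator s (fun _ => (1:ℝ)))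
        (measurable_const.indicator hs) (sandInd s hs)
    | @add f g hdisj hPf hPg =>
      rw [MeasureTheory.SimpleFunc.coe_add]
      exact sandAdd _ _ f.measurable g.measurable hPf hPg
  -- bounded measurable functions
  have sandBdd : ∀ (g : ℝ → ℝ) (M : ℝ), Measurable g → (∀ x, |g x| ≤ M) →
      T ∘L Φ₂ (fun x => g (1 - x)) ∘L T = T ∘L Φ g ∘L T := by
    intro g M mg hb
    have h0 : (0:ℝ) ∈ (Set.univ : Set ℝ) := Set.mem_univ 0
    set F := fun n => MeasureTheory.SimpleFunc.approxOn g mg Set.univ 0 h0 n with hF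
    refine sandLim (fun n x => F n x) g (2 * M) (fun n => (F n).measurable) mg ?_ ?_ ?_
    · intro n x
      have h1 := MeasureTheory.SimpleFunc.edist_approxOn_le mg h0 x n
      rw [edist_dist, edist_dist] at h1
      have h2 : dist (F n x) (g x) ≤ dist 0 (g x) :=
        (ENNReal.ofReal_le_ofReal_iff dist_nonneg).mp h1
      have h3 : dist 0 (g x) = |g x| := by rw [dist_comm, Real.dist_eq, sub_zero]
      have h4 : |F n x - g x| ≤ |g x| := by
        rw [← Real.dist_eq]; rw [h3] at h2; exact h2
      calc |F n x| = |(F n x - g x) + g x| := by ring_nf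
        _ ≤ |F n x - g x| + |g x| := abs_add_le _ _
        _ ≤ |g x| + |g x| := add_le_add h4 le_rfl
        _ ≤ 2 * M := by linarith [hb x]
    · intro x
      exact MeasureTheory.SimpleFunc.tendsto_approxOn mg h0 (by simp)
    · intro n
      exact sandSimple (F n)
  -- conclusion
  obtain ⟨M₀, hM₀⟩ := hhb
  have mh' : Measurable (fun x => h (projI x)) := hh.comp measurable_projI
  have hb' : ∀ x, |h (projI x)| ≤ M₀ := fun x => hM₀ _ (projI_mem x)
  exact sandCongr (fun x => h (projI x)) h mh' hh
    (fun x hx => by show h (projI x) = h x; rw [projI_eq hx])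
    (sandBdd (fun x => h (projI x)) M₀ mh' hb')


end PWaux

/-- If `φ(x,y) = y f(y)` on the segment `x + y = 1` for a bounded Borel `f`, then
`φ(A,B) = B^{1/2} V f(S) V* B^{1/2}` where `Y = V|Y|` is the polar decomposition of the
Douglas contraction `Y` and `S = Y*Y`. If `f` is an indicator function, `V f(S) V*` is an
orthogonal projection. -/
theorem stmt4 (A B : H →L[ℂ] H) (hA : A.IsPositive) (hB : B.IsPositive)
    (d : DouglasTuple A B) (V MY : H →L[ℂ] H) (hpolar : IsPolarDecomp d.Y V MY)
    (Φ : (ℝ → ℝ) → H →L[ℂ] H) (hΦ : IsBorelCalc (adjoint d.Y ∘L d.Y) Φ)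
    (f : ℝ → ℝ) (hf : Measurable f) (hfb : ∃ M : ℝ, ∀ x : ℝ, |f x| ≤ M)
    (φ : ℝ → ℝ → ℝ)
    (hmeas : Measurable (Function.uncurry φ))
    (hhom : ∀ l x y : ℝ, 0 < l → 0 ≤ x → 0 ≤ y → φ (l * x) (l * y) = l * φ x y)
    (hbdd : ∀ M : ℝ, ∃ C : ℝ, ∀ x y : ℝ, 0 ≤ x → x ≤ M → 0 ≤ y → y ≤ M → |φ x y| ≤ C)
    (hrep : ∀ x y : ℝ, 0 ≤ x → 0 ≤ y → x + y = 1 → φ x y = y * f y)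
    (C : H →L[ℂ] H) (hC : IsPW A B φ C) :
    C = d.sqB ∘L (V ∘L Φ f ∘L adjoint V) ∘L d.sqB ∧
    (∀ s : Set ℝ, f = s.indicator (fun _ => (1 : ℝ)) →
      IsSelfAdjoint (V ∘L Φ f ∘L adjoint V) ∧
      (V ∘L Φ f ∘L adjoint V) ∘L (V ∘L Φ f ∘L adjoint V) = V ∘L Φ f ∘L adjoint V) := by
  classical
  obtain ⟨d₂, Φ₂, hΦ₂, hCeq⟩ := hC
  have hTsa : adjoint d.sqAB = d.sqAB := d.sqAB_pos.isSelfAdjoint.adjoint_eq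
  have h2AB : d₂.sqAB = d.sqAB :=
    PWaux.sqrt_unique' d₂.sqAB_pos d.sqAB_pos d₂.sqAB_sq d.sqAB_sq
  rw [h2AB] at hCeq
  -- positivity and spectra
  have hSpos : (adjoint d.Y ∘L d.Y).IsPositive := PWaux.isPos_adj_self d.Y
  have hRpos : (adjoint d₂.X ∘L d₂.X).IsPositive := PWaux.isPos_adj_self d₂.X
  have hS1 : ((1 : H →L[ℂ] H) - adjoint d.Y ∘L d.Y).IsPositive := PWaux.one_sub_pos d.Y_contr
  have hR1 : ((1 : H →L[ℂ] H) - adjoint d₂.X ∘L d₂.X).IsPositive := PWaux.one_sub_pos d₂.X_contr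
  have hspecS : ∀ x : ℝ, (x:ℂ) ∈ spectrum ℂ (adjoint d.Y ∘L d.Y) → x ∈ Set.Icc (0:ℝ) 1 :=
    fun x hx => PWaux.spec01 hSpos hS1 hx
  have hspecR : ∀ x : ℝ, (x:ℂ) ∈ spectrum ℂ (adjoint d₂.X ∘L d₂.X) → x ∈ Set.Icc (0:ℝ) 1 :=
    fun x hx => PWaux.spec01 hRpos hR1 hx
  have hSsa : IsSelfAdjoint (adjoint d.Y ∘L d.Y) := hSpos.isSelfAdjoint
  have hRsa : IsSelfAdjoint (adjoint d₂.X ∘L d₂.X) := hRpos.isSelfAdjoint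
  set D : H →L[ℂ] H := 1 - adjoint d₂.X ∘L d₂.X - adjoint d.Y ∘L d.Y with hD
  have hDsa : IsSelfAdjoint D :=
    ((IsSelfAdjoint.one (R := H →L[ℂ] H)).sub hRsa).sub hSsa
  have hXT : d₂.X ∘L d.sqAB = d₂.sqA := by rw [← h2AB]; exact d₂.X_eq
  have hTRT : d.sqAB ∘L ((adjoint d₂.X ∘L d₂.X) ∘L d.sqAB) = A := by
    calc d.sqAB ∘L ((adjoint d₂.X ∘L d₂.X) ∘L d.sqAB)
        = d.sqAB ∘L (adjoint d₂.X ∘L (d₂.X ∘L d.sqAB)) := by rw [comp_assoc]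
      _ = (d.sqAB ∘L adjoint d₂.X) ∘L (d₂.X ∘L d.sqAB) := (comp_assoc _ _ _).symm
      _ = adjoint (d₂.X ∘L d.sqAB) ∘L (d₂.X ∘L d.sqAB) := by rw [adjoint_comp, hTsa]
      _ = A := by rw [hXT, d₂.sqA_pos.isSelfAdjoint.adjoint_eq, d₂.sqA_sq]
  have hTST : d.sqAB ∘L ((adjoint d.Y ∘L d.Y) ∘L d.sqAB) = B := by
    calc d.sqAB ∘L ((adjoint d.Y ∘L d.Y) ∘L d.sqAB)
        = d.sqAB ∘L (adjoint d.Y ∘L (d.Y ∘L d.sqAB)) := by rw [comp_assoc]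
      _ = (d.sqAB ∘L adjoint d.Y) ∘L (d.Y ∘L d.sqAB) := (comp_assoc _ _ _).symm
      _ = adjoint (d.Y ∘L d.sqAB) ∘L (d.Y ∘L d.sqAB) := by rw [adjoint_comp, hTsa]
      _ = B := by rw [d.Y_eq, d.sqB_pos.isSelfAdjoint.adjoint_eq, d.sqB_sq]
  have hTDT : d.sqAB ∘L (D ∘L d.sqAB) = 0 := by
    rw [hD, sub_comp, sub_comp, one_def, id_comp, comp_sub, comp_sub, d.sqAB_sq, hTRT, hTST]
    abel
  have hDT : D ∘L d.sqAB = 0 := by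
    ext ξ
    have horth : ∀ ζ : H, ⟪d.sqAB ζ, D (d.sqAB ξ)⟫_ℂ = 0 := by
      intro ζ
      have e1 : ⟪d.sqAB ζ, D (d.sqAB ξ)⟫_ℂ = ⟪D (d.sqAB ζ), d.sqAB ξ⟫_ℂ := by
        conv_lhs => rw [← hDsa.adjoint_eq]
        exact adjoint_inner_right D (d.sqAB ζ) (d.sqAB ξ)
      have e2 : ⟪D (d.sqAB ζ), d.sqAB ξ⟫_ℂ = ⟪d.sqAB (D (d.sqAB ζ)), ξ⟫_ℂ := by
        rw [← (adjoint_inner_left d.sqAB ξ (D (d.sqAB ζ))), hTsa]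
      have e3 : d.sqAB (D (d.sqAB ζ)) = 0 := by
        have h5 := ContinuousLinearMap.ext_iff.mp hTDT ζ
        simpa using h5
      rw [e1, e2, e3, inner_zero_left]
    have hXη : d₂.X (D (d.sqAB ξ)) = 0 :=
      d₂.X_supp _ (fun ζ => by rw [h2AB]; exact horth ζ)
    have hYη : d.Y (D (d.sqAB ξ)) = 0 := d.Y_supp _ horth
    have hexp : D (d.sqAB ξ) = d.sqAB ξ - adjoint d₂.X (d₂.X (d.sqAB ξ))
        - adjoint d.Y (d.Y (d.sqAB ξ)) := rfl
    have t1 : ⟪D (d.sqAB ξ), d.sqAB ξ⟫_ℂ = 0 := by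
      rw [← inner_conj_symm, horth ξ, map_zero]
    have t2 : ⟪D (d.sqAB ξ), adjoint d₂.X (d₂.X (d.sqAB ξ))⟫_ℂ = 0 := by
      rw [adjoint_inner_right d₂.X _ _, hXη, inner_zero_left]
    have t3 : ⟪D (d.sqAB ξ), adjoint d.Y (d.Y (d.sqAB ξ))⟫_ℂ = 0 := by
      rw [adjoint_inner_right d.Y _ _, hYη, inner_zero_left]
    have hinner : ⟪D (d.sqAB ξ), D (d.sqAB ξ)⟫_ℂ = 0 := by
      nth_rewrite 2 [hexp]
      rw [inner_sub_right, inner_sub_right, t1, t2, t3]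
      ring
    have hz : D (d.sqAB ξ) = 0 := inner_self_eq_zero.mp hinner
    simpa using hz
  have hRT : (adjoint d₂.X ∘L d₂.X + adjoint d.Y ∘L d.Y) ∘L d.sqAB = d.sqAB := by
    have e := hDT
    rw [hD, sub_comp, sub_comp, one_def, id_comp, sub_sub] at e
    rw [add_comp]
    exact (sub_eq_zero.mp e).symm
  have hYD : d.Y ∘L D = 0 := by
    ext ξ
    show d.Y (D ξ) = 0
    apply d.Y_supp
    intro ζ
    have e1 : ⟪d.sqAB ζ, D ξ⟫_ℂ = ⟪D (d.sqAB ζ), ξ⟫_ℂ := by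
      conv_lhs => rw [← hDsa.adjoint_eq]
      exact adjoint_inner_right D (d.sqAB ζ) ξ
    have e2 : D (d.sqAB ζ) = 0 := by
      have h5 := ContinuousLinearMap.ext_iff.mp hDT ζ
      simpa using h5
    rw [e1, e2, inner_zero_left]
  have hSD : (adjoint d.Y ∘L d.Y) ∘L D = 0 := by
    rw [comp_assoc, hYD, comp_zero]
  have hDS : D ∘L (adjoint d.Y ∘L d.Y) = 0 := by
    have h6 := congrArg adjoint hSD
    have h0 : adjoint (0 : H →L[ℂ] H) = 0 := by
      rw [← star_eq_adjoint, star_zero]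
    rwa [adjoint_comp, hDsa.adjoint_eq, hSsa.adjoint_eq, h0] at h6
  have hRS : (adjoint d₂.X ∘L d₂.X + adjoint d.Y ∘L d.Y) ∘L (adjoint d.Y ∘L d.Y)
      = adjoint d.Y ∘L d.Y := by
    have e := hDS
    rw [hD, sub_comp, sub_comp, one_def, id_comp, sub_sub] at e
    rw [add_comp]
    exact (sub_eq_zero.mp e).symm
  -- master sandwich lemma
  obtain ⟨Mf, hMf⟩ := hfb
  have hmain := PWaux.sand_master d.sqAB (adjoint d₂.X ∘L d₂.X) (adjoint d.Y ∘L d.Y) Φ Φ₂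
    hΦ hΦ₂ hspecS hspecR hRT hRS (fun x => x * f x) (measurable_id.mul hf)
    ⟨Mf, fun x hx => by
      rw [abs_mul]
      have hx1 : |x| ≤ 1 := abs_le.mpr ⟨by linarith [hx.1], hx.2⟩
      calc |x| * |f x| ≤ 1 * Mf :=
          mul_le_mul hx1 (hMf x) (abs_nonneg _) zero_le_one
        _ = Mf := one_mul _⟩
  have ggmeas : Measurable (fun x : ℝ => φ x (1 - x)) :=
    hmeas.comp (measurable_id.prodMk (measurable_const.sub measurable_id))
  have hgσmeas : Measurable (fun x : ℝ => (1 - x) * f (1 - x)) :=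
    (measurable_const.sub measurable_id).mul (hf.comp (measurable_const.sub measurable_id))
  have gEq : Φ₂ (fun x => φ x (1 - x)) = Φ₂ (fun x => (1 - x) * f (1 - x)) := by
    refine hΦ₂.2.2.2.2.2.2.1 _ _ ggmeas hgσmeas fun x hx => ?_
    rcases hspecR x hx with ⟨h0, h1⟩
    exact hrep x (1 - x) h0 (by linarith) (by ring)
  have ΦhEq : Φ (fun x => x * f x) = (adjoint d.Y ∘L d.Y) ∘L Φ f := by
    have e : (fun x : ℝ => x * f x) = _root_.id * f := rfl
    rw [e, hΦ.2.1 _root_.id f measurable_id hf, hΦ.2.2.2.2.1]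
  -- polar decomposition facts
  obtain ⟨hMpos, hMM, hVM, hVnorm, hVsupp⟩ := hpolar
  have hMsa : adjoint MY = MY := hMpos.isSelfAdjoint.adjoint_eq
  have hVMp : ∀ u : H, V (MY u) = d.Y u := fun u => ContinuousLinearMap.ext_iff.mp hVM u
  have hMMp : ∀ u : H, MY (MY u) = adjoint d.Y (d.Y u) :=
    fun u => ContinuousLinearMap.ext_iff.mp hMM u
  have hVVMp : ∀ u : H, adjoint V (V (MY u)) = MY u := by
    intro u
    have horth : ∀ ζ : H, ⟪MY ζ, adjoint V (V (MY u)) - MY u⟫_ℂ = 0 := by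
      intro ζ
      rw [inner_sub_right, adjoint_inner_right V (MY ζ) (V (MY u)), hVMp ζ, hVMp u]
      have e3 : ⟪d.Y ζ, d.Y u⟫_ℂ = ⟪MY ζ, MY u⟫_ℂ := by
        calc ⟪d.Y ζ, d.Y u⟫_ℂ = ⟪ζ, adjoint d.Y (d.Y u)⟫_ℂ :=
            (adjoint_inner_right d.Y ζ (d.Y u)).symm
          _ = ⟪ζ, MY (MY u)⟫_ℂ := by rw [← hMMp u]
          _ = ⟪ζ, adjoint MY (MY u)⟫_ℂ := by rw [hMsa]
          _ = ⟪MY ζ, MY u⟫_ℂ := adjoint_inner_right MY ζ (MY u)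
      rw [e3, sub_self]
    have hVη : V (adjoint V (V (MY u)) - MY u) = 0 := hVsupp _ horth
    have hinner : ⟪adjoint V (V (MY u)) - MY u, adjoint V (V (MY u)) - MY u⟫_ℂ = 0 := by
      rw [inner_sub_right]
      have t1 : ⟪adjoint V (V (MY u)) - MY u, adjoint V (V (MY u))⟫_ℂ = 0 := by
        rw [adjoint_inner_right V _ (V (MY u)), hVη, inner_zero_left]
      have t2 : ⟪adjoint V (V (MY u)) - MY u, MY u⟫_ℂ = 0 := by
        rw [← inner_conj_symm, horth u, map_zero]
      rw [t1, t2, sub_zero]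
    exact sub_eq_zero.mp (inner_self_eq_zero.mp hinner)
  -- MY is Φ of the square root
  have mq : Measurable (fun x : ℝ => Real.sqrt x) := Real.continuous_sqrt.measurable
  have mq4 : Measurable (fun x : ℝ => Real.sqrt (Real.sqrt x)) :=
    (Real.continuous_sqrt.comp Real.continuous_sqrt).measurable
  have hq44 : (fun x : ℝ => Real.sqrt (Real.sqrt x)) * (fun x : ℝ => Real.sqrt (Real.sqrt x))
      = fun x : ℝ => Real.sqrt x := by
    funext x
    exact Real.mul_self_sqrt (Real.sqrt_nonneg x)
  have hΦq_pos : (Φ (fun x : ℝ => Real.sqrt x)).IsPositive := by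
    have e : Φ (fun x : ℝ => Real.sqrt x)
        = Φ (fun x : ℝ => Real.sqrt (Real.sqrt x)) ∘L Φ (fun x : ℝ => Real.sqrt (Real.sqrt x)) := by
      rw [← hΦ.2.1 _ _ mq4 mq4, hq44]
    rw [e]
    exact PWaux.isPositive_sq (hΦ.2.2.2.2.2.1 _ mq4)
  have hqq : Φ (fun x : ℝ => Real.sqrt x) ∘L Φ (fun x : ℝ => Real.sqrt x)
      = adjoint d.Y ∘L d.Y := by
    rw [← hΦ.2.1 _ _ mq mq]
    have e : Φ ((fun x : ℝ => Real.sqrt x) * fun x : ℝ => Real.sqrt x) = Φ _root_.id :=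
      hΦ.2.2.2.2.2.2.1 _ _ (mq.mul mq) measurable_id fun x hx => by
        have h0 := (hspecS x hx).1
        show Real.sqrt x * Real.sqrt x = x
        exact Real.mul_self_sqrt h0
    rw [e, hΦ.2.2.2.2.1]
  have hMq : MY = Φ (fun x : ℝ => Real.sqrt x) :=
    PWaux.sqrt_unique' hMpos hΦq_pos hMM hqq
  have hcomm : MY ∘L Φ f = Φ f ∘L MY := by
    rw [hMq, ← hΦ.2.1 _ f mq hf, ← hΦ.2.1 f _ hf mq, mul_comm]
  have hcommp : ∀ u : H, MY (Φ f u) = Φ f (MY u) :=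
    fun u => ContinuousLinearMap.ext_iff.mp hcomm u
  have hsqBL : d.sqB = d.sqAB ∘L adjoint d.Y := by
    calc d.sqB = adjoint d.sqB := d.sqB_pos.isSelfAdjoint.adjoint_eq.symm
      _ = adjoint (d.Y ∘L d.sqAB) := by rw [d.Y_eq]
      _ = adjoint d.sqAB ∘L adjoint d.Y := adjoint_comp _ _
      _ = d.sqAB ∘L adjoint d.Y := by rw [hTsa]
  have hsqBp : ∀ u, d.sqB u = d.sqAB (adjoint d.Y u) :=
    fun u => ContinuousLinearMap.ext_iff.mp hsqBL u
  have rhs_eq : d.sqB ∘L (V ∘L Φ f ∘L adjoint V) ∘L d.sqB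
      = d.sqAB ∘L (((adjoint d.Y ∘L d.Y) ∘L Φ f) ∘L d.sqAB) := by
    ext ξ
    show d.sqB (V (Φ f (adjoint V (d.sqB ξ))))
      = d.sqAB (adjoint d.Y (d.Y (Φ f (d.sqAB ξ))))
    have s1 : d.sqB ξ = V (MY (d.sqAB ξ)) := by
      calc d.sqB ξ = d.Y (d.sqAB ξ) := (ContinuousLinearMap.ext_iff.mp d.Y_eq ξ).symm
        _ = V (MY (d.sqAB ξ)) := (hVMp _).symm
    calc d.sqB (V (Φ f (adjoint V (d.sqB ξ))))
        = d.sqB (V (Φ f (adjoint V (V (MY (d.sqAB ξ)))))) := by rw [s1]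
      _ = d.sqB (V (Φ f (MY (d.sqAB ξ)))) := by rw [hVVMp]
      _ = d.sqB (V (MY (Φ f (d.sqAB ξ)))) := by rw [← hcommp]
      _ = d.sqB (d.Y (Φ f (d.sqAB ξ))) := by rw [hVMp]
      _ = d.sqAB (adjoint d.Y (d.Y (Φ f (d.sqAB ξ)))) := hsqBp _
  refine ⟨?_, ?_⟩
  · calc C = d.sqAB ∘L Φ₂ (fun x => φ x (1 - x)) ∘L d.sqAB := hCeq
      _ = d.sqAB ∘L Φ₂ (fun x => (1 - x) * f (1 - x)) ∘L d.sqAB := by rw [gEq]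
      _ = d.sqAB ∘L Φ (fun x => x * f x) ∘L d.sqAB := hmain
      _ = d.sqAB ∘L ((adjoint d.Y ∘L d.Y) ∘L Φ f) ∘L d.sqAB := by rw [ΦhEq]
      _ = d.sqB ∘L (V ∘L Φ f ∘L adjoint V) ∘L d.sqB := rhs_eq.symm
  · intro s hfs
    have hfsa : IsSelfAdjoint (Φ f) := hΦ.2.2.2.2.2.1 f hf
    have hQsa : IsSelfAdjoint (V ∘L Φ f ∘L adjoint V) := by
      rw [isSelfAdjoint_iff']
      calc adjoint (V ∘L Φ f ∘L adjoint V)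
          = adjoint (Φ f ∘L adjoint V) ∘L adjoint V := by rw [adjoint_comp]
        _ = (adjoint (adjoint V) ∘L adjoint (Φ f)) ∘L adjoint V := by rw [adjoint_comp]
        _ = (V ∘L Φ f) ∘L adjoint V := by rw [adjoint_adjoint, hfsa.adjoint_eq]
        _ = V ∘L Φ f ∘L adjoint V := comp_assoc _ _ _
    refine ⟨hQsa, ?_⟩
    have hff : f * f = f := by
      rw [hfs]; funext x; by_cases hx : x ∈ s <;> simp [Set.indicator, hx]
    have hΦff : ∀ u, Φ f (Φ f u) = Φ f u := by
      intro u
      have e : Φ f ∘L Φ f = Φ f := by rw [← hΦ.2.1 f f hf hf, hff]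
      exact ContinuousLinearMap.ext_iff.mp e u
    have hVfVV : ∀ ξ : H, V (Φ f (adjoint V (V ξ))) = V (Φ f ξ) := by
      intro ξ
      have hz : V (Φ f (adjoint V (V ξ) - ξ)) = 0 := by
        apply hVsupp
        intro ζ
        have e1 : ⟪MY ζ, Φ f (adjoint V (V ξ) - ξ)⟫_ℂ
            = ⟪Φ f (MY ζ), adjoint V (V ξ) - ξ⟫_ℂ := by
          conv_lhs => rw [← hfsa.adjoint_eq]
          exact adjoint_inner_right (Φ f) (MY ζ) _
        rw [e1, ← hcommp ζ, inner_sub_right]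
        have e2 : ⟪MY (Φ f ζ), adjoint V (V ξ)⟫_ℂ = ⟪MY (Φ f ζ), ξ⟫_ℂ := by
          rw [adjoint_inner_right V (MY (Φ f ζ)) (V ξ),
            ← adjoint_inner_left V ξ (V (MY (Φ f ζ))), hVVMp]
        rw [e2, sub_self]
      rw [map_sub, map_sub] at hz
      exact sub_eq_zero.mp hz
    ext ξ
    show V (Φ f (adjoint V (V (Φ f (adjoint V ξ))))) = V (Φ f (adjoint V ξ))
    rw [hVfVV (Φ f (adjoint V ξ)), hΦff (adjoint V ξ)]

end
end

section
/- Let A, B be positive bounded operators on H and Y the Douglas contraction with Y(A+B)^{1/2} = B^{1/2}. Then ker(Y*) = ker(B^{1/2}); in particular B^{1/2}(I − VV*)B^{1/2} = 0 where V is the partial isometry in the polar decomposition of Y. -/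
open ContinuousLinearMap Filter Topology
open scoped InnerProductSpace

noncomputable section

variable {H : Type*} [NormedAddCommGroup H] [InnerProductSpace ℂ H] [CompleteSpace H]

/-- `ker Y* = ker B^{1/2}`; in particular `B^{1/2}(1 − VV*)B^{1/2} = 0` for the partial
isometry `V` of the polar decomposition of `Y`. -/
theorem stmt6 (A B : H →L[ℂ] H) (hA : A.IsPositive) (hB : B.IsPositive)
    (d : DouglasTuple A B) (V MY : H →L[ℂ] H) (hpolar : IsPolarDecomp d.Y V MY) :
    (∀ ξ : H, adjoint d.Y ξ = 0 ↔ d.sqB ξ = 0) ∧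
    d.sqB ∘L (1 - V ∘L adjoint V) ∘L d.sqB = 0 := by
  obtain ⟨hMpos, hMsq, hVM, hViso, hVsupp⟩ := hpolar
  have hsqB_sa : IsSelfAdjoint d.sqB := d.sqB_pos.isSelfAdjoint
  have hsqAB_sa : IsSelfAdjoint d.sqAB := d.sqAB_pos.isSelfAdjoint
  -- sqB = sqAB ∘ Y*
  have hB_eq : d.sqAB ∘L adjoint d.Y = d.sqB := by
    have := congrArg adjoint d.Y_eq
    rwa [adjoint_comp, hsqAB_sa.adjoint_eq, hsqB_sa.adjoint_eq] at this
  -- inner product preserved by V on range of M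
  have hVinner : ∀ x y : H, ⟪V (MY x), V (MY y)⟫_ℂ = ⟪MY x, MY y⟫_ℂ := by
    intro x y
    rw [inner_eq_sum_norm_sq_div_four, inner_eq_sum_norm_sq_div_four]
    simp only [← map_add, ← map_sub, ← map_smul, hViso]
  -- V*V M ζ = M ζ
  have hVVM : ∀ ζ : H, adjoint V (V (MY ζ)) = MY ζ := by
    intro ζ
    set u := adjoint V (V (MY ζ)) - MY ζ with hu
    have hMu : ∀ η : H, ⟪MY η, u⟫_ℂ = 0 := by
      intro η
      rw [hu, inner_sub_right, adjoint_inner_right, hVinner η ζ, sub_self]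
    have hVu : V u = 0 := hVsupp u hMu
    have : ⟪u, u⟫_ℂ = 0 := by
      rw [hu, inner_sub_left, ← hu]
      have h1 : ⟪adjoint V (V (MY ζ)), u⟫_ℂ = 0 := by
        rw [adjoint_inner_left, hVu, inner_zero_right]
      have h2 : ⟪MY ζ, u⟫_ℂ = 0 := hMu ζ
      rw [h1, h2, sub_zero]
    have := inner_self_eq_zero.mp this
    have : adjoint V (V (MY ζ)) = MY ζ := by
      have := sub_eq_zero.mp this
      exact this
    exact this
  -- VV* sqB = sqB
  have hVVsqB : ∀ ξ : H, V (adjoint V (d.sqB ξ)) = d.sqB ξ := by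
    intro ξ
    have hsqB_eq : d.sqB ξ = V (MY (d.sqAB ξ)) := by
      have h1 : d.Y (d.sqAB ξ) = d.sqB ξ := congrFun (congrArg DFunLike.coe d.Y_eq) ξ
      have h2 : V (MY (d.sqAB ξ)) = d.Y (d.sqAB ξ) := congrFun (congrArg DFunLike.coe hVM) (d.sqAB ξ)
      rw [h2, h1]
    rw [hsqB_eq, hVVM]
  constructor
  · intro ξ
    constructor
    · intro h
      have : d.sqB ξ = d.sqAB (adjoint d.Y ξ) := (congrFun (congrArg DFunLike.coe hB_eq) ξ).symm
      rw [this, h, map_zero]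
    · intro h
      set u := adjoint d.Y ξ with hu
      have hAu : d.sqAB u = 0 := by
        have : d.sqAB (adjoint d.Y ξ) = d.sqB ξ := congrFun (congrArg DFunLike.coe hB_eq) ξ
        rw [← hu] at this; rw [this, h]
      have hsup : ∀ η : H, ⟪d.sqAB η, u⟫_ℂ = 0 := by
        intro η
        rw [← hsqAB_sa.adjoint_eq, adjoint_inner_left, hAu, inner_zero_right]
      have hYu : d.Y u = 0 := d.Y_supp u hsup
      have : ⟪u, u⟫_ℂ = 0 := by
        rw [hu, adjoint_inner_left, hYu, inner_zero_right]
      exact inner_self_eq_zero.mp this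
  · ext ξ
    simp only [comp_apply, sub_apply, one_apply, comp_apply, zero_apply]
    rw [hVVsqB ξ, show (1 : H →L[ℂ] H) (d.sqB ξ) = d.sqB ξ from rfl, sub_self, map_zero]

end
end

section
/- Let R, S be positive bounded operators on a Hilbert space K with R + S = I. Let E be the spectral measure of R, and define S_c = S·E((0,1]) and S_s = S·E({0}). Then S = S_c + S_s, S_c is R-absolutely continuous (there exist positive operators S_n increasing strongly to S_c with S_n ≤ nR), and S_s ⊥ R (no nonzero positive operator is dominated by both S_s and R). -/
open ContinuousLinearMap Filter Topology
open scoped InnerProductSpace Pointwise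

noncomputable section

variable {H : Type*} [NormedAddCommGroup H] [InnerProductSpace ℂ H] [CompleteSpace H]

section Aux
variable {K : Type*} [NormedAddCommGroup K] [InnerProductSpace ℂ K] [CompleteSpace K]

set_option maxHeartbeats 2000000
set_option synthInstance.maxHeartbeats 1000000

lemma aux_pos_apply_eq_zero {C : K →L[ℂ] K} (hC : C.IsPositive) {η : K}
    (h : ⟪C η, η⟫_ℂ = 0) : C η = 0 := by
  have hC0 : (0 : K →L[ℂ] K) ≤ C := (nonneg_iff_isPositive C).mpr hC
  set T := CFC.sqrt C with hT
  have hT0 : (0 : K →L[ℂ] K) ≤ T := CFC.sqrt_nonneg C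
  have hTP : T.IsPositive := (nonneg_iff_isPositive T).mp hT0
  have hTT : T * T = C := CFC.sqrt_mul_sqrt_self C hC0
  have hsymm := (isSelfAdjoint_iff_isSymmetric (A := T)).mp hTP.isSelfAdjoint
  have h1 : T η = 0 := by
    rw [← inner_self_eq_zero (𝕜 := ℂ)]
    calc ⟪T η, T η⟫_ℂ = ⟪η, T (T η)⟫_ℂ := hsymm (T η) η ▸ (hsymm η (T η))
      _ = ⟪η, C η⟫_ℂ := by rw [← hTT]; rfl
      _ = 0 := by rw [← inner_conj_symm, h, map_zero]
  calc C η = T (T η) := by rw [← hTT]; rfl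
    _ = 0 := by rw [h1, map_zero]

lemma aux_dominated_zero {C A : K →L[ℂ] K} (hC : C.IsPositive) (hAC : (A - C).IsPositive)
    {η : K} (hA : RCLike.re ⟪A η, η⟫_ℂ ≤ 0) : C η = 0 := by
  have h1 : 0 ≤ RCLike.re ⟪(A - C) η, η⟫_ℂ := (Complex.nonneg_iff.mp (hAC.inner_nonneg_left η)).1
  have h2 : 0 ≤ RCLike.re ⟪C η, η⟫_ℂ := (Complex.nonneg_iff.mp (hC.inner_nonneg_left η)).1
  have h3 : RCLike.re ⟪(A - C) η, η⟫_ℂ = RCLike.re ⟪A η, η⟫_ℂ - RCLike.re ⟪C η, η⟫_ℂ := by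
    rw [sub_apply, inner_sub_left, map_sub]
  have h4 : RCLike.re ⟪C η, η⟫_ℂ = 0 := by linarith
  have h5 := ((isPositive_iff_complex C).mp hC η).1
  exact aux_pos_apply_eq_zero hC (by rw [← h5, h4]; simp)

theorem stmt8' (R S Q : K →L[ℂ] K) (hR : R.IsPositive) (hS : S.IsPositive) (hRS : R + S = 1)
    (hQ : IsSelfAdjoint Q ∧ Q ∘L Q = Q ∧ Set.range (⇑Q) = closure (Set.range (⇑R))) :
    S = S ∘L Q + S ∘L (1 - Q) ∧
    (∃ (Bn : ℕ → K →L[ℂ] K) (α : ℕ → ℝ),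
      (∀ n, (Bn n).IsPositive) ∧ (∀ n, (Bn (n + 1) - Bn n).IsPositive) ∧
      (∀ n, 0 < α n) ∧ (∀ n, ((α n : ℂ) • R - Bn n).IsPositive) ∧
      ∀ ξ : K, Tendsto (fun n => Bn n ξ) atTop (𝓝 ((S ∘L Q) ξ))) ∧
    (∀ C : K →L[ℂ] K, C.IsPositive → (S ∘L (1 - Q) - C).IsPositive → (R - C).IsPositive →
      C = 0) := by
  obtain ⟨hQsa, hQidem, hQran⟩ := hQ
  have hS_eq : S = 1 - R := eq_sub_of_add_eq' hRS
  have hRsa : IsSelfAdjoint R := hR.isSelfAdjoint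
  have hR0 : (0 : K →L[ℂ] K) ≤ R := (nonneg_iff_isPositive R).mpr hR
  have hS0 : (0 : K →L[ℂ] K) ≤ S := (nonneg_iff_isPositive S).mpr hS
  -- spectrum of R is contained in [0, 1]
  have hspec : ∀ x ∈ spectrum ℝ R, 0 ≤ x ∧ x ≤ 1 := by
    intro x hx
    refine ⟨spectrum_nonneg_of_nonneg hR0 hx, ?_⟩
    have h1 : (1 : ℝ) - x ∈ ({(1:ℝ)} : Set ℝ) - spectrum ℝ R :=
      ⟨1, rfl, x, hx, rfl⟩
    rw [spectrum.singleton_sub_eq] at h1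
    have h2 : algebraMap ℝ (K →L[ℂ] K) 1 - R = S := by rw [map_one, hS_eq]
    rw [h2] at h1
    linarith [spectrum_nonneg_of_nonneg hS0 h1]
  -- basic facts about Q
  have hQQ : ∀ x, Q (Q x) = Q x := fun x => by
    simpa using ContinuousLinearMap.ext_iff.mp hQidem x
  have hQR : ∀ x, Q (R x) = R x := by
    intro x
    have hmem : R x ∈ Set.range ⇑Q := by rw [hQran]; exact subset_closure ⟨x, rfl⟩
    obtain ⟨y, hy⟩ := hmem
    rw [← hy, hQQ]
  have hQRc : Q ∘L R = R := ContinuousLinearMap.ext fun x => hQR x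
  have hRQc : R ∘L Q = R := by
    have h1 : adjoint (Q ∘L R) = adjoint R ∘L adjoint Q := adjoint_comp Q R
    rw [hQRc, hRsa.adjoint_eq, hQsa.adjoint_eq] at h1
    exact h1.symm
  have hRQ : ∀ x, R (Q x) = R x := fun x => by simpa using ContinuousLinearMap.ext_iff.mp hRQc x
  have hSQ1 : S ∘L (1 - Q) = 1 - Q := by
    rw [hS_eq]
    have : (1 - R) * (1 - Q) = 1 - Q - (R - R * Q) := by noncomm_ring
    rw [show (1 - R) ∘L (1 - Q) = (1 - R) * (1 - Q) from rfl, this,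
      show R * Q = R ∘L Q from rfl, hRQc, sub_self, sub_zero]
  have hSQ_apply : ∀ x, (S ∘L Q) x = Q x - R (Q x) := by
    intro x
    simp only [comp_apply, hS_eq, sub_apply, one_apply]
    rfl
  refine ⟨?_, ?_, ?_⟩
  · -- decomposition
    ext x
    simp only [add_apply, comp_apply, sub_apply, one_apply, map_sub]
    abel
  · -- absolute continuity
    set f : ℕ → ℝ → ℝ := fun n x => (1 - x) * min (((n : ℝ) + 1) * x) 1 with hf
    set d : ℕ → ℝ → ℝ := fun n x => (1 - x) - f n x with hd
    have hfc : ∀ n, Continuous (f n) := fun n =>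
      (continuous_const.sub continuous_id).mul
        ((continuous_const.mul continuous_id).min continuous_const)
    have hdc : ∀ n, Continuous (d n) := fun n =>
      (continuous_const.sub continuous_id).sub (hfc n)
    have hpos : ∀ n, (cfc (f n) R).IsPositive := by
      intro n
      rw [← nonneg_iff_isPositive]
      refine cfc_nonneg fun x hx => ?_
      obtain ⟨hx0, hx1⟩ := hspec x hx
      have : (0:ℝ) ≤ ((n : ℝ) + 1) * x := by positivity
      exact mul_nonneg (by linarith) (le_min this zero_le_one)
    have hmono : ∀ n, (cfc (f (n+1)) R - cfc (f n) R).IsPositive := by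
      intro n
      rw [← nonneg_iff_isPositive, ← cfc_sub (f (n+1)) (f n) R (hfc _).continuousOn
        (hfc _).continuousOn]
      refine cfc_nonneg fun x hx => ?_
      obtain ⟨hx0, hx1⟩ := hspec x hx
      have h1 : ((n : ℝ) + 1) * x ≤ ((n : ℝ) + 1 + 1) * x := by nlinarith
      have h2 : min (((n : ℝ) + 1) * x) 1 ≤ min (((n : ℝ) + 1 + 1) * x) 1 :=
        min_le_min h1 le_rfl
      have h3 : (0:ℝ) ≤ 1 - x := by linarith
      simp only [hf, Nat.cast_add, Nat.cast_one]
      nlinarith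
    have hsmul : ∀ n : ℕ, ((((n : ℝ) + 1) : ℂ) • R) = cfc (fun x : ℝ => ((n : ℝ) + 1) * x) R := by
      intro n
      have h1 : cfc ((((n : ℝ) + 1)) • (id : ℝ → ℝ)) R = (((n : ℝ) + 1)) • R :=
        cfc_smul_id ((n : ℝ) + 1) R
      have h2 : ((((n : ℝ) + 1)) • (id : ℝ → ℝ)) = fun x : ℝ => ((n : ℝ) + 1) * x := by
        funext x; simp [smul_eq_mul]
      rw [← h2, h1, ← Complex.coe_smul]
      norm_num
    have hdom : ∀ n : ℕ, (((((n : ℝ) + 1) : ℂ)) • R - cfc (f n) R).IsPositive := by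
      intro n
      rw [← nonneg_iff_isPositive, hsmul n, ← cfc_sub (fun x : ℝ => ((n : ℝ) + 1) * x) (f n) R
        (continuous_const.mul continuous_id).continuousOn (hfc n).continuousOn]
      refine cfc_nonneg fun x hx => ?_
      obtain ⟨hx0, hx1⟩ := hspec x hx
      have hm1 : min (((n : ℝ) + 1) * x) 1 ≤ ((n : ℝ) + 1) * x := min_le_left _ _
      have hm0 : (0:ℝ) ≤ min (((n : ℝ) + 1) * x) 1 :=
        le_min (by positivity) zero_le_one
      simp only [hf]
      nlinarith
    -- key zero lemma on ker R
    have key0 : ∀ (n : ℕ) (η : K), R η = 0 → cfc (f n) R η = 0 := by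
      intro n η hη
      refine aux_dominated_zero (hpos n) (hdom n) ?_
      rw [smul_apply, hη, smul_zero, inner_zero_left, map_zero]
    -- relation : cfc (d n) R = (1 - R) - cfc (f n) R
    have hrel : ∀ n, cfc (d n) R = 1 - R - cfc (f n) R := by
      intro n
      have h1 : cfc (d n) R = cfc (fun x : ℝ => 1 - x) R - cfc (f n) R :=
        cfc_sub _ _ R (continuous_const.sub continuous_id).continuousOn (hfc n).continuousOn
      have h2 : cfc (fun x : ℝ => (1:ℝ) - x) R = 1 - R := by
        rw [show (fun x : ℝ => (1:ℝ) - x) = fun x : ℝ => (1 : ℝ → ℝ) x - id x from rfl,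
          cfc_sub (1 : ℝ → ℝ) id R continuous_const.continuousOn continuous_id.continuousOn,
          cfc_one ℝ R, cfc_id ℝ R]
      rw [h1, h2]
    have hdbound1 : ∀ n, ‖cfc (d n) R‖ ≤ 1 := by
      intro n
      refine norm_cfc_le zero_le_one fun x hx => ?_
      obtain ⟨hx0, hx1⟩ := hspec x hx
      have hm1 : min (((n : ℝ) + 1) * x) 1 ≤ 1 := min_le_right _ _
      have hm0 : (0:ℝ) ≤ min (((n : ℝ) + 1) * x) 1 := le_min (by positivity) zero_le_one
      rw [Real.norm_eq_abs, abs_le]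
      constructor
      · simp only [hd, hf]; nlinarith
      · simp only [hd, hf]; nlinarith
    have hdbound2 : ∀ (n : ℕ) (ζ : K),
        ‖cfc (d n) R (R ζ)‖ ≤ (1 / ((n : ℝ) + 1)) * ‖ζ‖ := by
      intro n ζ
      have hcomp : cfc (fun x : ℝ => d n x * x) R = cfc (d n) R * cfc (fun x : ℝ => x) R :=
        cfc_mul _ _ R (hdc n).continuousOn continuous_id.continuousOn
      rw [cfc_id' ℝ R] at hcomp
      have happ : cfc (d n) R (R ζ) = cfc (fun x : ℝ => d n x * x) R ζ := by
        rw [hcomp]; rfl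
      rw [happ]
      have hnorm : ‖cfc (fun x : ℝ => d n x * x) R‖ ≤ 1 / ((n : ℝ) + 1) := by
        refine norm_cfc_le (by positivity) fun x hx => ?_
        obtain ⟨hx0, hx1⟩ := hspec x hx
        have hn0 : (0:ℝ) < (n : ℝ) + 1 := by positivity
        rw [Real.norm_eq_abs]
        rcases le_or_gt (((n : ℝ) + 1) * x) 1 with h | h
        · have hmeq : min (((n : ℝ) + 1) * x) 1 = ((n : ℝ) + 1) * x := min_eq_left h
          have hx' : x ≤ 1 / ((n : ℝ) + 1) := by
            rw [le_div_iff₀ hn0]; linarith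
          have h0 : (0:ℝ) ≤ ((n : ℝ) + 1) * x := by positivity
          have e1 : (0:ℝ) ≤ (1 - x) * (1 - ((n : ℝ) + 1) * x) :=
            mul_nonneg (by linarith) (by linarith)
          have e2 : (1 - x) * (1 - ((n : ℝ) + 1) * x) ≤ 1 := by nlinarith
          have e3 := mul_le_mul_of_nonneg_right e2 hx0
          have e4 := mul_nonneg e1 hx0
          simp only [hd, hf, hmeq]
          rw [abs_le]
          constructor
          · nlinarith
          · nlinarith
        · have hmeq : min (((n : ℝ) + 1) * x) 1 = 1 := min_eq_right h.le
          simp only [hd, hf, hmeq]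
          rw [mul_one, sub_self, zero_mul, abs_zero]
          positivity
      calc ‖cfc (fun x : ℝ => d n x * x) R ζ‖ ≤ ‖cfc (fun x : ℝ => d n x * x) R‖ * ‖ζ‖ :=
            le_opNorm _ _
        _ ≤ (1 / ((n : ℝ) + 1)) * ‖ζ‖ := by
            exact mul_le_mul_of_nonneg_right hnorm (norm_nonneg _)
    -- strong convergence of cfc (d n) R to 0 on closure of range R
    have key1 : ∀ η ∈ closure (Set.range ⇑R),
        Tendsto (fun n => cfc (d n) R η) atTop (𝓝 0) := by
      intro η hη
      refine Metric.tendsto_atTop.mpr fun ε hε => ?_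
      obtain ⟨y, hy, hyd⟩ := Metric.mem_closure_iff.mp hη (ε / 3) (by linarith)
      obtain ⟨ζ, rfl⟩ := hy
      have ht : Tendsto (fun n : ℕ => (1 / ((n : ℝ) + 1)) * ‖ζ‖) atTop (𝓝 0) := by
        simpa using tendsto_one_div_add_atTop_nhds_zero_nat.mul_const ‖ζ‖
      have hev : ∀ᶠ n : ℕ in atTop, (1 / ((n : ℝ) + 1)) * ‖ζ‖ < ε / 3 :=
        ht.eventually_lt_const (by linarith)
      obtain ⟨N, hN⟩ := eventually_atTop.mp hev
      refine ⟨N, fun n hn => ?_⟩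
      rw [dist_eq_norm, sub_zero]
      have hsplit : cfc (d n) R η = cfc (d n) R (η - R ζ) + cfc (d n) R (R ζ) := by
        rw [← map_add]; congr 1; abel
      have hb1 : ‖cfc (d n) R (η - R ζ)‖ ≤ ‖η - R ζ‖ := by
        calc ‖cfc (d n) R (η - R ζ)‖ ≤ ‖cfc (d n) R‖ * ‖η - R ζ‖ := le_opNorm _ _
          _ ≤ 1 * ‖η - R ζ‖ := mul_le_mul_of_nonneg_right (hdbound1 n) (norm_nonneg _)
          _ = ‖η - R ζ‖ := one_mul _
      have hd2 := hdbound2 n ζ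
      have hdist : ‖η - R ζ‖ < ε / 3 := by rwa [← dist_eq_norm]
      have hN' := hN n hn
      calc ‖cfc (d n) R η‖ ≤ ‖cfc (d n) R (η - R ζ)‖ + ‖cfc (d n) R (R ζ)‖ := by
            rw [hsplit]; exact norm_add_le _ _
        _ < ε / 3 + ε / 3 := by
            apply add_lt_add_of_lt_of_le (lt_of_le_of_lt hb1 hdist)
            exact le_trans hd2 hN'.le
        _ < ε := by linarith
    refine ⟨fun n => cfc (f n) R, fun n => (n : ℝ) + 1, hpos, hmono,
      fun n => by positivity, ?_, ?_⟩
    · intro n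
      have := hdom n
      convert this using 2
      simp
    · intro ξ
      have hQmem : Q ξ ∈ closure (Set.range ⇑R) := by rw [← hQran]; exact ⟨ξ, rfl⟩
      have hker : R (ξ - Q ξ) = 0 := by rw [map_sub, hRQ, sub_self]
      have hvals : ∀ n, cfc (f n) R ξ = (Q ξ - R (Q ξ)) - cfc (d n) R (Q ξ) := by
        intro n
        have h1 : cfc (f n) R ξ = cfc (f n) R (Q ξ) := by
          conv_lhs => rw [show ξ = Q ξ + (ξ - Q ξ) by abel, map_add,
            key0 n (ξ - Q ξ) hker, add_zero]
        have h2 : cfc (d n) R (Q ξ) = (Q ξ - R (Q ξ)) - cfc (f n) R (Q ξ) := by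
          rw [hrel n]; simp [sub_apply, one_apply]
        rw [h1, h2]; abel
      rw [hSQ_apply ξ]
      have := Tendsto.sub
        (tendsto_const_nhds : Tendsto (fun _ : ℕ => Q ξ - R (Q ξ)) atTop (𝓝 (Q ξ - R (Q ξ))))
        (key1 (Q ξ) hQmem)
      rw [sub_zero] at this
      exact this.congr fun n => (hvals n).symm
  · -- mutual singularity
    intro C hC h1 h2
    rw [hSQ1] at h1
    ext x
    have hx1 : C (Q x) = 0 := by
      refine aux_dominated_zero hC h1 ?_
      have hz : (1 - Q) (Q x) = 0 := by
        simp only [sub_apply, one_apply, hQQ x, sub_self]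
        exact sub_self _
      rw [hz, inner_zero_left, map_zero]
    have hx2 : C (x - Q x) = 0 := by
      refine aux_dominated_zero hC h2 ?_
      have hz : R (x - Q x) = 0 := by rw [map_sub, hRQ, sub_self]
      rw [hz, inner_zero_left, map_zero]
    have : C x = C (Q x) + C (x - Q x) := by rw [← map_add]; congr 1; abel
    rw [this, hx1, hx2, add_zero, zero_apply]

end Aux

/-- For positive `R, S` with `R + S = 1` and `Q` the support projection of `R` (i.e. the
projection onto `cl ran R`, which is `E_R((0,1])`), the decomposition `S = SQ + S(1−Q)`
is an `R`-Lebesgue decomposition: `SQ ⋖ R` and `S(1−Q) ⊥ R`. -/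
theorem stmt8 {K : Type*} [NormedAddCommGroup K] [InnerProductSpace ℂ K] [CompleteSpace K]
    (R S Q : K →L[ℂ] K) (hR : R.IsPositive) (hS : S.IsPositive) (hRS : R + S = 1)
    (hQ : IsRangeProj R Q) :
    S = S ∘L Q + S ∘L (1 - Q) ∧ AbsCont (S ∘L Q) R ∧ MutuallySingular (S ∘L (1 - Q)) R := by
  obtain ⟨h1, h2, h3⟩ := stmt8' R S Q hR hS hRS hQ
  exact ⟨h1, h2, h3⟩

end
end

section
/- Let A, B be positive bounded operators on H and let B_c = Γ(S·E_R((0,1])) be the absolutely continuous part constructed from the spectral measure E_R of R = X*X. Then B_c is the maximum of the set of all A-absolutely continuous positive bounded operators C with C ≤ B: every such C satisfies C ≤ B_c. -/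
open ContinuousLinearMap Filter Topology
open scoped InnerProductSpace

noncomputable section

variable {H : Type*} [NormedAddCommGroup H] [InnerProductSpace ℂ H] [CompleteSpace H]

/-!
Write `T = (A+B)^{1/2}`, `R = X*X`, `S = Y*Y` and `K = cl ran T`. From `T R T = A`, `T S T = B`
and `ker T ∩ K = 0` one gets that `R + S` is the identity of `K`; since `Q` projects onto a
subspace of `K` containing `ran R`, it commutes with `S = 1 - R` there, so
`T S Q T = (Y Q T)* (Y Q T)` has quadratic form `‖Y Q T ξ‖²`.

Now let `D = W* W` be positive with `D ≤ C ≤ B` and `D ≤ α A`, so that `‖W ξ‖ ≤ ‖Y T ξ‖` and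
`‖W ξ‖ ≤ √α ‖X T ξ‖`. Split `T ξ = Q T ξ + q` with `q ∈ K` and `X q = 0`, and let `T η → q`.
Then `‖W ξ‖ ≤ ‖W (ξ - η)‖ + ‖W η‖ ≤ ‖Y (T ξ - T η)‖ + √α ‖X T η‖ → ‖Y Q T ξ‖`.
As `C` is an increasing strong limit of such `D`, its form is bounded by `‖Y Q T ξ‖²` as well.
-/

section Approximation

variable {𝕜 E F G₁ G₂ : Type*} [NormedField 𝕜] [SeminormedAddCommGroup E] [NormedSpace 𝕜 E]
  [SeminormedAddCommGroup F] [NormedSpace 𝕜 F] [SeminormedAddCommGroup G₁] [NormedSpace 𝕜 G₁]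
  [SeminormedAddCommGroup G₂] [NormedSpace 𝕜 G₂]

theorem norm_le_norm_sub_of_mem_closure_range {W : E →L[𝕜] F} {T : E →L[𝕜] G₁}
    {Y : G₁ →L[𝕜] F} {X : G₁ →L[𝕜] G₂} {c : ℝ}
    (hY : ∀ ξ, ‖W ξ‖ ≤ ‖Y (T ξ)‖) (hX : ∀ ξ, ‖W ξ‖ ≤ c * ‖X (T ξ)‖)
    {q : G₁} (hq : q ∈ closure (Set.range T)) (hXq : X q = 0) (ξ : E) :
    ‖W ξ‖ ≤ ‖Y (T ξ - q)‖ := by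
  have hclosed : IsClosed {v | ‖W ξ‖ ≤ ‖Y (T ξ - v)‖ + c * ‖X v‖} :=
    isClosed_le continuous_const (by fun_prop)
  have hrange : Set.range T ⊆ {v | ‖W ξ‖ ≤ ‖Y (T ξ - v)‖ + c * ‖X v‖} := by
    rintro _ ⟨η, rfl⟩
    calc ‖W ξ‖ = ‖W (ξ - η) + W η‖ := by rw [← map_add, sub_add_cancel]
      _ ≤ ‖W (ξ - η)‖ + ‖W η‖ := norm_add_le _ _
      _ ≤ ‖Y (T (ξ - η))‖ + c * ‖X (T η)‖ := add_le_add (hY _) (hX _)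
      _ = ‖Y (T ξ - T η)‖ + c * ‖X (T η)‖ := by rw [map_sub]
  simpa [hXq] using hclosed.closure_subset_iff.mpr hrange hq

end Approximation

section InnerProduct

variable {𝕜 E F : Type*} [RCLike 𝕜] [NormedAddCommGroup E] [InnerProductSpace 𝕜 E]
  [NormedAddCommGroup F] [InnerProductSpace 𝕜 F]

theorem ContinuousLinearMap.IsPositive.reApplyInnerSelf_le {S T : E →L[𝕜] E}
    (h : (T - S).IsPositive) (x : E) : S.reApplyInnerSelf x ≤ T.reApplyInnerSelf x := by
  simpa only [reApplyInnerSelf_apply, sub_apply, inner_sub_left, map_sub, sub_nonneg]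
    using h.re_inner_nonneg_left x

variable [CompleteSpace E] [CompleteSpace F]

theorem ContinuousLinearMap.comp_eq_of_adjoint_comp_self_comp_eq {X : E →L[𝕜] F}
    {P : E →L[𝕜] E} (h : (adjoint X ∘L X) ∘L P = adjoint X ∘L X) : X ∘L P = X := by
  ext v
  have hsq : ‖X (P v - v)‖ ^ 2 = 0 := by
    rw [apply_norm_sq_eq_inner_adjoint_left, map_sub, ← comp_apply _ P, h, sub_self,
      inner_zero_left, map_zero]
  simpa [sub_eq_zero] using hsq

theorem ContinuousLinearMap.adjoint_apply_mem_orthogonal_orthogonal {T : E →L[𝕜] E}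
    {X : E →L[𝕜] F} (hX : ∀ ξ, (∀ η, ⟪T η, ξ⟫_𝕜 = 0) → X ξ = 0) (η : F) :
    adjoint X η ∈ (LinearMap.range (T : E →ₗ[𝕜] E))ᗮᗮ := by
  rw [Submodule.mem_orthogonal]
  intro u hu
  rw [adjoint_inner_right, hX u fun ζ => (Submodule.mem_orthogonal _ u).mp hu _ ⟨ζ, rfl⟩,
    inner_zero_left]

theorem IsSelfAdjoint.eq_zero_of_mem_orthogonal_orthogonal_range {T : E →L[𝕜] E}
    (hT : IsSelfAdjoint T) {u : E} (hu : u ∈ (LinearMap.range (T : E →ₗ[𝕜] E))ᗮᗮ)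
    (hTu : T u = 0) : u = 0 := by
  have hu' : u ∈ (LinearMap.range (T : E →ₗ[𝕜] E))ᗮ := by
    rw [orthogonal_range, hT.adjoint_eq]
    exact hTu
  exact inner_self_eq_zero.mp ((Submodule.mem_orthogonal _ u).mp hu u hu')

end InnerProduct

theorem ContinuousLinearMap.IsPositive.exists_reApplyInnerSelf_eq_norm_sq {D : H →L[ℂ] H}
    (hD : D.IsPositive) : ∃ W : H →L[ℂ] H, ∀ ξ, D.reApplyInnerSelf ξ = ‖W ξ‖ ^ 2 := by
  obtain ⟨W, rfl⟩ := CStarAlgebra.nonneg_iff_eq_star_mul_self.mp ((nonneg_iff_isPositive D).mpr hD)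
  exact ⟨W, fun ξ => (apply_norm_sq_eq_inner_adjoint_left W ξ).symm⟩

namespace IsRangeProj

variable {T P : H →L[ℂ] H}

theorem comp_left (hP : IsRangeProj T P) : P ∘L T = T := by
  obtain ⟨-, hidem, hrange⟩ := hP
  ext v
  obtain ⟨w, hw⟩ : T v ∈ Set.range P := hrange ▸ subset_closure ⟨v, rfl⟩
  rw [comp_apply, ← hw, ← comp_apply P P, hidem]

theorem comp_right (hP : IsRangeProj T P) (hT : IsSelfAdjoint T) : T ∘L P = T := by
  simpa only [adjoint_comp, hT.adjoint_eq, hP.1.adjoint_eq] using congrArg adjoint hP.comp_left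

theorem apply_mem (hP : IsRangeProj T P) {K : Submodule ℂ H} (hK : IsClosed (K : Set H))
    (hTK : ∀ v, T v ∈ K) (v : H) : P v ∈ K := by
  have hv : P v ∈ closure (Set.range T) := hP.2.2 ▸ ⟨v, rfl⟩
  exact hK.closure_subset_iff.mpr (by rintro _ ⟨w, rfl⟩; exact hTK w) hv

end IsRangeProj

namespace DouglasTuple

variable {A B : H →L[ℂ] H} (d : DouglasTuple A B)

/-- `K = cl ran (A+B)^{1/2}`, written as a double orthogonal complement. -/
def space : Submodule ℂ H := (LinearMap.range (d.sqAB : H →ₗ[ℂ] H))ᗮᗮ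

theorem coe_space : (d.space : Set H) = closure (Set.range d.sqAB) := by
  rw [space, Submodule.orthogonal_orthogonal_eq_closure, Submodule.topologicalClosure_coe,
    LinearMap.coe_range, coe_coe]

theorem adjoint_X_apply_mem_space (η : H) : adjoint d.X η ∈ d.space :=
  adjoint_apply_mem_orthogonal_orthogonal d.X_supp η

theorem adjoint_Y_apply_mem_space (η : H) : adjoint d.Y η ∈ d.space :=
  adjoint_apply_mem_orthogonal_orthogonal d.Y_supp η

theorem apply_mem_space_of_isRangeProj {Q : H →L[ℂ] H}
    (hQ : IsRangeProj (adjoint d.X ∘L d.X) Q) (v : H) : Q v ∈ d.space :=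
  hQ.apply_mem (Submodule.isClosed_orthogonal _) (fun _ => d.adjoint_X_apply_mem_space _) v

theorem norm_X_sqAB_apply_sq (ξ : H) : ‖d.X (d.sqAB ξ)‖ ^ 2 = A.reApplyInnerSelf ξ := by
  rw [← comp_apply, d.X_eq, apply_norm_sq_eq_inner_adjoint_left,
    d.sqA_pos.isSelfAdjoint.adjoint_eq, d.sqA_sq, reApplyInnerSelf_apply]

theorem norm_Y_sqAB_apply_sq (ξ : H) : ‖d.Y (d.sqAB ξ)‖ ^ 2 = B.reApplyInnerSelf ξ := by
  rw [← comp_apply, d.Y_eq, apply_norm_sq_eq_inner_adjoint_left,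
    d.sqB_pos.isSelfAdjoint.adjoint_eq, d.sqB_sq, reApplyInnerSelf_apply]

theorem sqAB_comp_adjoint_comp_self_comp_sqAB {Z W : H →L[ℂ] H} (hW : IsSelfAdjoint W)
    (hZ : Z ∘L d.sqAB = W) : d.sqAB ∘L (adjoint Z ∘L Z) ∘L d.sqAB = W ∘L W := by
  calc d.sqAB ∘L (adjoint Z ∘L Z) ∘L d.sqAB = adjoint (Z ∘L d.sqAB) ∘L (Z ∘L d.sqAB) := by
        rw [adjoint_comp, d.sqAB_pos.isSelfAdjoint.adjoint_eq]; rfl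
    _ = W ∘L W := by rw [hZ, hW.adjoint_eq]

theorem adjoint_X_X_add_adjoint_Y_Y_apply {v : H} (hv : v ∈ d.space) :
    (adjoint d.X ∘L d.X + adjoint d.Y ∘L d.Y) v = v := by
  set F := adjoint d.X ∘L d.X + adjoint d.Y ∘L d.Y - 1
  suffices hker : d.space ≤ LinearMap.ker (F : H →ₗ[ℂ] H) by
    simpa [F, sub_eq_zero] using hker hv
  rw [space, Submodule.orthogonal_orthogonal_eq_closure]
  refine Submodule.topologicalClosure_minimal _ ?_ F.isClosed_ker
  rintro _ ⟨ζ, rfl⟩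
  have hFT : d.sqAB ∘L F ∘L d.sqAB = 0 := by
    simp only [F, add_comp, comp_add, sub_comp, comp_sub, one_def, id_comp,
      d.sqAB_comp_adjoint_comp_self_comp_sqAB d.sqA_pos.isSelfAdjoint d.X_eq,
      d.sqAB_comp_adjoint_comp_self_comp_sqAB d.sqB_pos.isSelfAdjoint d.Y_eq,
      d.sqA_sq, d.sqB_sq, d.sqAB_sq, sub_self]
  refine d.sqAB_pos.isSelfAdjoint.eq_zero_of_mem_orthogonal_orthogonal_range ?_
    (by simpa using congrArg (· ζ) hFT)
  exact d.space.sub_mem (d.space.add_mem (d.adjoint_X_apply_mem_space _)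
    (d.adjoint_Y_apply_mem_space _)) (Submodule.le_orthogonal_orthogonal _ ⟨ζ, rfl⟩)

theorem X_comp_of_isRangeProj {Q : H →L[ℂ] H} (hQ : IsRangeProj (adjoint d.X ∘L d.X) Q) :
    d.X ∘L Q = d.X :=
  comp_eq_of_adjoint_comp_self_comp_eq
    (hQ.comp_right (isPositive_adjoint_comp_self d.X).isSelfAdjoint)

theorem adjoint_Y_Y_comp_of_isRangeProj {Q : H →L[ℂ] H}
    (hQ : IsRangeProj (adjoint d.X ∘L d.X) Q) :
    (adjoint d.Y ∘L d.Y) ∘L Q = Q ∘L (adjoint d.Y ∘L d.Y) ∘L Q := by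
  have hRQ : (adjoint d.X ∘L d.X) ∘L Q = adjoint d.X ∘L d.X :=
    hQ.comp_right (isPositive_adjoint_comp_self d.X).isSelfAdjoint
  have hSQ : ∀ v, (adjoint d.Y ∘L d.Y) (Q v) = Q v - (adjoint d.X ∘L d.X) v := fun v => by
    rw [← hRQ, eq_sub_iff_add_eq', comp_apply _ Q, ← add_apply,
      d.adjoint_X_X_add_adjoint_Y_Y_apply (d.apply_mem_space_of_isRangeProj hQ v)]
  ext v
  have hQR : Q ((adjoint d.X ∘L d.X) v) = (adjoint d.X ∘L d.X) v := by
    rw [← comp_apply Q, hQ.comp_left]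
  have hQQ : Q (Q v) = Q v := by rw [← comp_apply Q Q, hQ.2.1]
  simp only [comp_apply] at hSQ hQR ⊢
  rw [hSQ, map_sub, hQQ, hQR]

theorem sqAB_comp_adjoint_Y_Y_comp_comp_sqAB_of_isRangeProj {Q : H →L[ℂ] H}
    (hQ : IsRangeProj (adjoint d.X ∘L d.X) Q) :
    d.sqAB ∘L ((adjoint d.Y ∘L d.Y) ∘L Q) ∘L d.sqAB
      = adjoint (d.Y ∘L Q ∘L d.sqAB) ∘L (d.Y ∘L Q ∘L d.sqAB) := by
  rw [d.adjoint_Y_Y_comp_of_isRangeProj hQ, adjoint_comp, adjoint_comp, hQ.1.adjoint_eq,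
    d.sqAB_pos.isSelfAdjoint.adjoint_eq]
  simp only [comp_assoc]

theorem reApplyInnerSelf_le_of_isRangeProj {Q : H →L[ℂ] H}
    (hQ : IsRangeProj (adjoint d.X ∘L d.X) Q) {D : H →L[ℂ] H} (hD : D.IsPositive) {α : ℝ}
    (hDB : ∀ ξ, D.reApplyInnerSelf ξ ≤ B.reApplyInnerSelf ξ)
    (hDA : ∀ ξ, D.reApplyInnerSelf ξ ≤ α * A.reApplyInnerSelf ξ) (ξ : H) :
    D.reApplyInnerSelf ξ ≤ ‖d.Y (Q (d.sqAB ξ))‖ ^ 2 := by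
  obtain ⟨W, hW⟩ := hD.exists_reApplyInnerSelf_eq_norm_sq
  have hq : d.sqAB ξ - Q (d.sqAB ξ) ∈ closure (Set.range d.sqAB) := by
    rw [← d.coe_space]
    exact d.space.sub_mem (Submodule.le_orthogonal_orthogonal _ ⟨ξ, rfl⟩)
      (d.apply_mem_space_of_isRangeProj hQ _)
  have hXq : d.X (d.sqAB ξ - Q (d.sqAB ξ)) = 0 := by
    rw [map_sub, ← comp_apply d.X Q, d.X_comp_of_isRangeProj hQ, sub_self]
  have hWY : ∀ ξ, ‖W ξ‖ ≤ ‖d.Y (d.sqAB ξ)‖ := fun ξ => by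
    rw [← sq_le_sq₀ (norm_nonneg _) (norm_nonneg _), ← hW, d.norm_Y_sqAB_apply_sq]
    exact hDB ξ
  have hWX : ∀ ξ, ‖W ξ‖ ≤ √α * ‖d.X (d.sqAB ξ)‖ := fun ξ => by
    rw [← Real.sqrt_sq (norm_nonneg (W ξ)), ← Real.sqrt_sq (norm_nonneg (d.X _)),
      ← Real.sqrt_mul' _ (sq_nonneg _), ← hW, d.norm_X_sqAB_apply_sq]
    exact Real.sqrt_le_sqrt (hDA ξ)
  rw [hW, sq_le_sq₀ (norm_nonneg _) (norm_nonneg _)]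
  simpa using norm_le_norm_sub_of_mem_closure_range hWY hWX hq hXq ξ

end DouglasTuple

section AbsCont

variable {E : Type*} [NormedAddCommGroup E] [InnerProductSpace ℂ E]

theorem AbsCont.reApplyInnerSelf_le {C A : E →L[ℂ] E} (hCA : AbsCont C A) {f : E → ℝ}
    (hf : ∀ D : E →L[ℂ] E, D.IsPositive → ∀ α : ℝ,
      (∀ ξ, D.reApplyInnerSelf ξ ≤ C.reApplyInnerSelf ξ) →
      (∀ ξ, D.reApplyInnerSelf ξ ≤ α * A.reApplyInnerSelf ξ) → ∀ ξ, D.reApplyInnerSelf ξ ≤ f ξ)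
    (ξ : E) : C.reApplyInnerSelf ξ ≤ f ξ := by
  obtain ⟨Bn, α, hpos, hmono, -, hle, hlim⟩ := hCA
  have hform : ∀ ξ, Tendsto (fun n => (Bn n).reApplyInnerSelf ξ) atTop
      (𝓝 (C.reApplyInnerSelf ξ)) := fun ξ =>
    (Complex.continuous_re.tendsto _).comp ((hlim ξ).inner tendsto_const_nhds)
  have hBnC : ∀ n ξ, (Bn n).reApplyInnerSelf ξ ≤ C.reApplyInnerSelf ξ := fun n ξ =>
    (monotone_nat_of_le_succ fun k => (hmono k).reApplyInnerSelf_le ξ).ge_of_tendsto (hform ξ) n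
  have hBnA : ∀ n ξ, (Bn n).reApplyInnerSelf ξ ≤ α n * A.reApplyInnerSelf ξ := fun n ξ => by
    have := (hle n).reApplyInnerSelf_le ξ
    simp only [reApplyInnerSelf_apply, smul_apply, inner_smul_left, Complex.conj_ofReal] at this ⊢
    simpa using this
  exact le_of_tendsto' (hform ξ) fun n => hf (Bn n) (hpos n) (α n) (hBnC n) (hBnA n) ξ

end AbsCont

theorem stmt10_general (A B : H →L[ℂ] H)
    (d : DouglasTuple A B) (Q : H →L[ℂ] H)
    (hQ : IsRangeProj (adjoint d.X ∘L d.X) Q)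
    (C : H →L[ℂ] H) (hCpos : C.IsPositive) (hCB : (B - C).IsPositive) (hCA : AbsCont C A) :
    ((d.sqAB ∘L ((adjoint d.Y ∘L d.Y) ∘L Q) ∘L d.sqAB) - C).IsPositive := by
  have hform : ∀ ξ, C.reApplyInnerSelf ξ ≤ ‖d.Y (Q (d.sqAB ξ))‖ ^ 2 :=
    hCA.reApplyInnerSelf_le fun D hD _ hDC hDA ξ =>
      d.reApplyInnerSelf_le_of_isRangeProj hQ hD
        (fun ξ => (hDC ξ).trans (hCB.reApplyInnerSelf_le ξ)) hDA ξ
  rw [isPositive_def', d.sqAB_comp_adjoint_Y_Y_comp_comp_sqAB_of_isRangeProj hQ]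
  refine ⟨(isPositive_adjoint_comp_self _).isSelfAdjoint.sub hCpos.isSelfAdjoint, fun ξ => ?_⟩
  have hnorm := apply_norm_sq_eq_inner_adjoint_left (d.Y ∘L Q ∘L d.sqAB) ξ
  rw [reApplyInnerSelf_apply, sub_apply, inner_sub_left, map_sub, ← hnorm]
  exact sub_nonneg.mpr (hform ξ)

/-- `B_c = Γ(S E_R((0,1]))` is the maximum of all `A`-absolutely continuous positive
operators `C ≤ B`. -/
theorem stmt10 (A B : H →L[ℂ] H) (hA : A.IsPositive) (hB : B.IsPositive)
    (d : DouglasTuple A B) (Q : H →L[ℂ] H)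
    (hQ : IsRangeProj (adjoint d.X ∘L d.X) Q)
    (C : H →L[ℂ] H) (hCpos : C.IsPositive) (hCB : (B - C).IsPositive) (hCA : AbsCont C A) :
    ((d.sqAB ∘L ((adjoint d.Y ∘L d.Y) ∘L Q) ∘L d.sqAB) - C).IsPositive :=
  stmt10_general A B d Q hQ C hCpos hCB hCA

end
end

section
/- Let A, B be positive bounded operators on H and Y the Douglas contraction with Y(A+B)^{1/2} = B^{1/2}. Then ran((I − YY*)^{1/2}) = {ξ ∈ H : B^{1/2}ξ ∈ ran(A^{1/2})}. -/
open ContinuousLinearMap Filter Topology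
open scoped InnerProductSpace

noncomputable section

variable {H : Type*} [NormedAddCommGroup H] [InnerProductSpace ℂ H] [CompleteSpace H]

private lemma sq_norm_le (a b : ℝ) (_ha : 0 ≤ a) (hb : 0 ≤ b) (h : a ^ 2 ≤ b ^ 2) :
    a ≤ b := by nlinarith

lemma douglas_lemma (T : H →L[ℂ] H) (ξ : H) :
    ξ ∈ Set.range (⇑(adjoint T)) ↔ ∃ c : ℝ, ∀ ζ : H, ‖⟪ξ, ζ⟫_ℂ‖ ≤ c * ‖T ζ‖ := by
  constructor
  · rintro ⟨η, rfl⟩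
    refine ⟨‖η‖, fun ζ => ?_⟩
    rw [adjoint_inner_left]
    exact norm_inner_le_norm η (T ζ)
  · rintro ⟨c, hc⟩
    set Tl : H →ₗ[ℂ] H := (T : H →ₗ[ℂ] H) with hTl
    set ℓ : H →ₗ[ℂ] ℂ := ((innerSL ℂ ξ : H →L[ℂ] ℂ) : H →ₗ[ℂ] ℂ) with hℓ
    have hℓap : ∀ ζ : H, ℓ ζ = ⟪ξ, ζ⟫_ℂ := fun ζ => rfl
    have hker : LinearMap.ker Tl ≤ LinearMap.ker ℓ := by
      intro ζ hζ
      rw [LinearMap.mem_ker] at hζ ⊢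
      have h0 : ‖⟪ξ, ζ⟫_ℂ‖ ≤ c * ‖T ζ‖ := hc ζ
      have : T ζ = 0 := hζ
      rw [this, norm_zero, mul_zero] at h0
      rw [hℓap]
      exact norm_le_zero_iff.mp h0
    set f₀ : LinearMap.range Tl →ₗ[ℂ] ℂ :=
      ((LinearMap.ker Tl).liftQ ℓ hker).comp Tl.quotKerEquivRange.symm.toLinearMap with hf₀
    have key : ∀ ζ : H, f₀ ⟨Tl ζ, LinearMap.mem_range_self Tl ζ⟩ = ⟪ξ, ζ⟫_ℂ := by
      intro ζ
      rw [hf₀]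
      simp only [LinearMap.comp_apply, LinearEquiv.coe_toLinearMap]
      rw [LinearMap.quotKerEquivRange_symm_apply_image, Submodule.mkQ_apply,
        Submodule.liftQ_apply, hℓap]
    have bound : ∀ v : LinearMap.range Tl, ‖f₀ v‖ ≤ |c| * ‖v‖ := by
      rintro ⟨v, ζ, rfl⟩
      rw [key]
      calc ‖⟪ξ, ζ⟫_ℂ‖ ≤ c * ‖T ζ‖ := hc ζ
        _ ≤ |c| * ‖T ζ‖ := mul_le_mul_of_nonneg_right (le_abs_self c) (norm_nonneg _)
        _ = |c| * ‖(⟨Tl ζ, LinearMap.mem_range_self Tl ζ⟩ : LinearMap.range Tl)‖ := rfl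
    set f₁ : LinearMap.range Tl →L[ℂ] ℂ := f₀.mkContinuous (|c|) bound with hf₁
    obtain ⟨g, hg, -⟩ := exists_extension_norm_eq (LinearMap.range Tl) f₁
    refine ⟨(InnerProductSpace.toDual ℂ H).symm g, ?_⟩
    apply ext_inner_right ℂ
    intro ζ
    rw [adjoint_inner_left, InnerProductSpace.toDual_symm_apply]
    have h2 : g (T ζ) = f₁ ⟨Tl ζ, LinearMap.mem_range_self Tl ζ⟩ :=
      hg ⟨Tl ζ, LinearMap.mem_range_self Tl ζ⟩
    rw [h2, hf₁, LinearMap.mkContinuous_apply, key]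

/-- `ran((1 − YY*)^{1/2}) = {ξ : B^{1/2}ξ ∈ ran A^{1/2}}`. -/
theorem stmt16 (A B : H →L[ℂ] H) (hA : A.IsPositive) (hB : B.IsPositive)
    (d : DouglasTuple A B) (W : H →L[ℂ] H)
    (hW : IsSqrtOf (1 - d.Y ∘L adjoint d.Y) W) :
    Set.range (⇑W) = {ξ : H | d.sqB ξ ∈ Set.range (⇑d.sqA)} := by
  obtain ⟨hWpos, hWsq⟩ := hW
  set T := d.sqAB with hT
  set X := d.X with hX
  set Y := d.Y with hY
  have hWsa : adjoint W = W := hWpos.isSelfAdjoint.adjoint_eq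
  have hTsa : adjoint T = T := d.sqAB_pos.isSelfAdjoint.adjoint_eq
  have hsqAsa : adjoint d.sqA = d.sqA := d.sqA_pos.isSelfAdjoint.adjoint_eq
  have hsqBsa : adjoint d.sqB = d.sqB := d.sqB_pos.isSelfAdjoint.adjoint_eq
  have hinner : ∀ (S : H →L[ℂ] H), adjoint S = S → ∀ x y : H, ⟪S x, y⟫_ℂ = ⟪x, S y⟫_ℂ := by
    intro S hS x y
    rw [← hS, adjoint_inner_left, hS]
  have hXT : ∀ ζ : H, X (T ζ) = d.sqA ζ := fun ζ => by
    rw [← ContinuousLinearMap.comp_apply, d.X_eq]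
  have hYT : ∀ ζ : H, Y (T ζ) = d.sqB ζ := fun ζ => by
    rw [← ContinuousLinearMap.comp_apply, d.Y_eq]
  -- F5 : ‖W u‖² = ‖u‖² − ‖Y* u‖²
  have hWnorm : ∀ u : H, ‖W u‖ ^ 2 = ‖u‖ ^ 2 - ‖adjoint Y u‖ ^ 2 := by
    intro u
    have h1 : ⟪W u, W u⟫_ℂ = ⟪u, u⟫_ℂ - ⟪adjoint Y u, adjoint Y u⟫_ℂ := by
      have ha : ⟪W u, W u⟫_ℂ = ⟪u, W (W u)⟫_ℂ := hinner W hWsa u (W u)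
      have hb : W (W u) = u - Y (adjoint Y u) := by
        have := DFunLike.congr_fun hWsq u
        simpa using this
      rw [ha, hb, inner_sub_right, adjoint_inner_left]
    rw [norm_sq_eq_re_inner (𝕜 := ℂ) (W u), norm_sq_eq_re_inner (𝕜 := ℂ) u,
      norm_sq_eq_re_inner (𝕜 := ℂ) (adjoint Y u), h1, map_sub]
  -- F3 on range T
  have hXY : ∀ ζ : H, ‖X (T ζ)‖ ^ 2 + ‖Y (T ζ)‖ ^ 2 = ‖T ζ‖ ^ 2 := by
    intro ζ
    have hA2 : ⟪X (T ζ), X (T ζ)⟫_ℂ = ⟪ζ, A ζ⟫_ℂ := by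
      rw [hXT]
      have h1 : ⟪d.sqA ζ, d.sqA ζ⟫_ℂ = ⟪ζ, d.sqA (d.sqA ζ)⟫_ℂ := hinner d.sqA hsqAsa ζ _
      rw [h1, ← ContinuousLinearMap.comp_apply, d.sqA_sq]
    have hB2 : ⟪Y (T ζ), Y (T ζ)⟫_ℂ = ⟪ζ, B ζ⟫_ℂ := by
      rw [hYT]
      have h1 : ⟪d.sqB ζ, d.sqB ζ⟫_ℂ = ⟪ζ, d.sqB (d.sqB ζ)⟫_ℂ := hinner d.sqB hsqBsa ζ _
      rw [h1, ← ContinuousLinearMap.comp_apply, d.sqB_sq]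
    have hT2 : ⟪T ζ, T ζ⟫_ℂ = ⟪ζ, A ζ⟫_ℂ + ⟪ζ, B ζ⟫_ℂ := by
      have h1 : ⟪T ζ, T ζ⟫_ℂ = ⟪ζ, T (T ζ)⟫_ℂ := hinner T hTsa ζ _
      rw [h1, ← ContinuousLinearMap.comp_apply, d.sqAB_sq, ContinuousLinearMap.add_apply,
        inner_add_right]
    rw [norm_sq_eq_re_inner (𝕜 := ℂ) (X (T ζ)), norm_sq_eq_re_inner (𝕜 := ℂ) (Y (T ζ)),
      norm_sq_eq_re_inner (𝕜 := ℂ) (T ζ), hA2, hB2, hT2, map_add]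
  -- F3 on closure
  have hXYc : ∀ u ∈ closure (Set.range (⇑T)), ‖X u‖ ^ 2 + ‖Y u‖ ^ 2 = ‖u‖ ^ 2 := by
    have hclosed : IsClosed {u : H | ‖X u‖ ^ 2 + ‖Y u‖ ^ 2 = ‖u‖ ^ 2} :=
      isClosed_eq (((X.continuous.norm.pow 2).add (Y.continuous.norm.pow 2)))
        (continuous_norm.pow 2)
    intro u hu
    exact closure_minimal (by rintro _ ⟨ζ, rfl⟩; exact hXY ζ) hclosed hu
  -- F4 : ran Y* ⊆ closure ran T
  have hYmem : ∀ ζ : H, adjoint Y ζ ∈ closure (Set.range (⇑T)) := by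
    intro ζ
    set S : Submodule ℂ H := LinearMap.range (T : H →ₗ[ℂ] H) with hS
    have hSc : (S.topologicalClosure : Set H) = closure (Set.range (⇑T)) := by
      rw [Submodule.topologicalClosure_coe, hS, LinearMap.coe_range,
        ContinuousLinearMap.coe_coe]
    have hmem : adjoint Y ζ ∈ Sᗮᗮ := by
      rw [Submodule.mem_orthogonal]
      intro v hv
      have hYv : Y v = 0 := by
        apply d.Y_supp
        intro η
        exact (Submodule.mem_orthogonal S v).mp hv (T η) ⟨η, rfl⟩
      rw [adjoint_inner_right, hYv, inner_zero_left]
    rw [← hSc, ← Submodule.orthogonal_orthogonal_eq_closure]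
    exact hmem
  -- AM-GM key inequalities
  have hamgm1 : ∀ v : H, ‖Y v‖ ^ 2 ≤ ‖adjoint Y (Y v)‖ * ‖v‖ := by
    intro v
    calc ‖Y v‖ ^ 2 = RCLike.re ⟪adjoint Y (Y v), v⟫_ℂ := by
          rw [adjoint_inner_left, inner_self_eq_norm_sq]
      _ ≤ ‖⟪adjoint Y (Y v), v⟫_ℂ‖ := RCLike.re_le_norm _
      _ ≤ ‖adjoint Y (Y v)‖ * ‖v‖ := norm_inner_le_norm _ _
  have hamgm2 : ∀ ζ : H, ‖adjoint Y ζ‖ ^ 2 ≤ ‖ζ‖ * ‖Y (adjoint Y ζ)‖ := by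
    intro ζ
    calc ‖adjoint Y ζ‖ ^ 2 = RCLike.re ⟪ζ, Y (adjoint Y ζ)⟫_ℂ := by
          rw [← adjoint_inner_left, inner_self_eq_norm_sq]
      _ ≤ ‖⟪ζ, Y (adjoint Y ζ)⟫_ℂ‖ := RCLike.re_le_norm _
      _ ≤ ‖ζ‖ * ‖Y (adjoint Y ζ)‖ := norm_inner_le_norm _ _
  -- main equivalence
  ext ξ
  simp only [Set.mem_setOf_eq]
  rw [show Set.range (⇑W) = Set.range (⇑(adjoint W)) by rw [hWsa],
    show Set.range (⇑d.sqA) = Set.range (⇑(adjoint d.sqA)) by rw [hsqAsa],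
    douglas_lemma, douglas_lemma]
  constructor
  · rintro ⟨c, hc⟩
    refine ⟨|c|, fun ζ => ?_⟩
    have h1 : ⟪d.sqB ξ, ζ⟫_ℂ = ⟪ξ, Y (T ζ)⟫_ℂ :=
      (hinner d.sqB hsqBsa ξ ζ).trans (by rw [hYT])
    have hWY : ‖W (Y (T ζ))‖ ≤ ‖X (T ζ)‖ := by
      apply sq_norm_le _ _ (norm_nonneg _) (norm_nonneg _)
      have e1 := hWnorm (Y (T ζ))
      have e2 := hXY ζ
      have e3 := hamgm1 (T ζ)
      nlinarith [sq_nonneg (‖adjoint Y (Y (T ζ))‖ - ‖T ζ‖), norm_nonneg (T ζ),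
        norm_nonneg (adjoint Y (Y (T ζ)))]
    rw [h1, ← hXT]
    calc ‖⟪ξ, Y (T ζ)⟫_ℂ‖ ≤ c * ‖W (Y (T ζ))‖ := hc (Y (T ζ))
      _ ≤ |c| * ‖W (Y (T ζ))‖ := mul_le_mul_of_nonneg_right (le_abs_self c) (norm_nonneg _)
      _ ≤ |c| * ‖X (T ζ)‖ := mul_le_mul_of_nonneg_left hWY (abs_nonneg c)
  · rintro ⟨c, hc⟩
    refine ⟨|c| + ‖W ξ‖, fun ζ => ?_⟩
    -- extend bound to closure
    have hcl : ∀ u ∈ closure (Set.range (⇑T)), ‖⟪ξ, Y u⟫_ℂ‖ ≤ |c| * ‖X u‖ := by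
      have hclosed : IsClosed {u : H | ‖⟪ξ, Y u⟫_ℂ‖ ≤ |c| * ‖X u‖} :=
        isClosed_le ((continuous_const.inner Y.continuous).norm)
          (continuous_const.mul X.continuous.norm)
      intro u hu
      refine closure_minimal ?_ hclosed hu
      rintro _ ⟨η, rfl⟩
      have h1 : ⟪ξ, Y (T η)⟫_ℂ = ⟪d.sqB ξ, η⟫_ℂ :=
        ((hinner d.sqB hsqBsa ξ η).trans (by rw [hYT])).symm
      show ‖⟪ξ, Y (T η)⟫_ℂ‖ ≤ |c| * ‖X (T η)‖
      rw [h1, hXT]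
      calc ‖⟪d.sqB ξ, η⟫_ℂ‖ ≤ c * ‖d.sqA η‖ := hc η
        _ ≤ |c| * ‖d.sqA η‖ := mul_le_mul_of_nonneg_right (le_abs_self c) (norm_nonneg _)
    have hdec : ζ = Y (adjoint Y ζ) + W (W ζ) := by
      have := DFunLike.congr_fun hWsq ζ
      simp only [ContinuousLinearMap.comp_apply, ContinuousLinearMap.sub_apply,
        ContinuousLinearMap.one_apply] at this
      rw [this]
      abel
    have hXle : ‖X (adjoint Y ζ)‖ ≤ ‖W ζ‖ := by
      apply sq_norm_le _ _ (norm_nonneg _) (norm_nonneg _)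
      have e1 := hXYc (adjoint Y ζ) (hYmem ζ)
      have e2 := hWnorm ζ
      have e3 := hamgm2 ζ
      nlinarith [sq_nonneg (‖ζ‖ - ‖Y (adjoint Y ζ)‖), norm_nonneg ζ,
        norm_nonneg (Y (adjoint Y ζ))]
    have hterm2 : ‖⟪ξ, W (W ζ)⟫_ℂ‖ ≤ ‖W ξ‖ * ‖W ζ‖ := by
      have h1 : ⟪ξ, W (W ζ)⟫_ℂ = ⟪W ξ, W ζ⟫_ℂ := (hinner W hWsa ξ (W ζ)).symm
      rw [h1]
      exact norm_inner_le_norm _ _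
    calc ‖⟪ξ, ζ⟫_ℂ‖ = ‖⟪ξ, Y (adjoint Y ζ)⟫_ℂ + ⟪ξ, W (W ζ)⟫_ℂ‖ := by
          rw [← inner_add_right]
          exact congrArg _ (congrArg _ hdec)
      _ ≤ ‖⟪ξ, Y (adjoint Y ζ)⟫_ℂ‖ + ‖⟪ξ, W (W ζ)⟫_ℂ‖ := norm_add_le _ _
      _ ≤ |c| * ‖X (adjoint Y ζ)‖ + ‖W ξ‖ * ‖W ζ‖ :=
          add_le_add (hcl _ (hYmem ζ)) hterm2
      _ ≤ |c| * ‖W ζ‖ + ‖W ξ‖ * ‖W ζ‖ :=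
          add_le_add_left (mul_le_mul_of_nonneg_left hXle (abs_nonneg c)) _
      _ = (|c| + ‖W ξ‖) * ‖W ζ‖ := by ring


end
end
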